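/- arXiv:2101.07445 — 5 statements merged into one kernel-verified Lean document; each statement's English description precedes it below -/
import Mathlib

section
/- Let h, c, f, g : ℝ² × ℝ → ℝ be twice continuously differentiable. Set Q := √(1 + h_x² + h_y²), v_n := h_t/Q, v₁ := −h_x·v_n/Q + f, v₂ := −h_y·v_n/Q + g, and H := −∂_x(h_x/Q) − ∂_y(h_y/Q). Then at every point: ∂_t(c·Q) + ∂_x(c·Q·v₁) + ∂_y(c·Q·v₂) = Q·[ ∂_t c − (v_n/Q)·(c_x·h_x + c_y·h_y) + v_n·c·H + (1/Q)·(∂_x(c·Q·f) + ∂_y(c·Q·g)) ]. In particular, the conservative continuity equation ∂_t(cQ) + ∇·(cQ(v₁,v₂)) = 0 holds at a point if and only if the nonconservative form ∂_t c − v_n·∇c·∇h/Q + v_n·c·H + (1/Q)·∇·(cQ(f,g)) = 0 holds there. -/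
/-- partial derivative in `x` -/
noncomputable def px (f : ℝ → ℝ → ℝ → ℝ) (x y t : ℝ) : ℝ := deriv (fun x' => f x' y t) x

/-- partial derivative in `y` -/
noncomputable def py (f : ℝ → ℝ → ℝ → ℝ) (x y t : ℝ) : ℝ := deriv (fun y' => f x y' t) y

/-- partial derivative in `t` -/
noncomputable def pt (f : ℝ → ℝ → ℝ → ℝ) (x y t : ℝ) : ℝ := deriv (fun t' => f x y t') t

/-- the area element `Q = √(1 + h_x² + h_y²)` -/
noncomputable def Qarea (h : ℝ → ℝ → ℝ → ℝ) (x y t : ℝ) : ℝ :=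
  Real.sqrt (1 + px h x y t ^ 2 + py h x y t ^ 2)

/-- the mean curvature `H = −∂_x(h_x/Q) − ∂_y(h_y/Q)` -/
noncomputable def meanCurv (h : ℝ → ℝ → ℝ → ℝ) (x y t : ℝ) : ℝ :=
  -px (fun x y t => px h x y t / Qarea h x y t) x y t
    - py (fun x y t => py h x y t / Qarea h x y t) x y t

/-- the normal velocity `v_n = h_t/Q` -/
noncomputable def vN (h : ℝ → ℝ → ℝ → ℝ) (x y t : ℝ) : ℝ := pt h x y t / Qarea h x y t

/-- `v₁ = −h_x·v_n/Q + f` -/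
noncomputable def vOne (h f : ℝ → ℝ → ℝ → ℝ) (x y t : ℝ) : ℝ :=
  -px h x y t * vN h x y t / Qarea h x y t + f x y t

/-- `v₂ = −h_y·v_n/Q + g` -/
noncomputable def vTwo (h g : ℝ → ℝ → ℝ → ℝ) (x y t : ℝ) : ℝ :=
  -py h x y t * vN h x y t / Qarea h x y t + g x y t

private lemma HasDerivAt.congr_d {f : ℝ → ℝ} {f' g' x : ℝ}
    (hd : HasDerivAt f f' x) (e : f' = g') : HasDerivAt f g' x := e ▸ hd

private lemma hasDerivAt_line_comp {E : Type*} [NormedAddCommGroup E] [NormedSpace ℝ E]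
    {F : ℝ × ℝ × ℝ → E} {γ : ℝ → ℝ × ℝ × ℝ} {v : ℝ × ℝ × ℝ} {s : ℝ}
    (hF : DifferentiableAt ℝ F (γ s)) (hγ : HasDerivAt γ v s) :
    HasDerivAt (fun u => F (γ u)) (fderiv ℝ F (γ s) v) s :=
  hF.hasFDerivAt.comp_hasDerivAt s hγ

private lemma lineX (y t x : ℝ) :
    HasDerivAt (fun x' : ℝ => ((x', y, t) : ℝ × ℝ × ℝ)) (1, 0, 0) x :=
  (hasDerivAt_id x).prodMk (hasDerivAt_const x (y, t))

private lemma lineY (x t y : ℝ) :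
    HasDerivAt (fun y' : ℝ => ((x, y', t) : ℝ × ℝ × ℝ)) (0, 1, 0) y :=
  (hasDerivAt_const y x).prodMk ((hasDerivAt_id y).prodMk (hasDerivAt_const y t))

private lemma lineT (x y t : ℝ) :
    HasDerivAt (fun t' : ℝ => ((x, y, t') : ℝ × ℝ × ℝ)) (0, 0, 1) t :=
  (hasDerivAt_const t x).prodMk ((hasDerivAt_const t y).prodMk (hasDerivAt_id t))

private lemma hasDerivAt_fderiv_apply {F : ℝ × ℝ × ℝ → ℝ}
    (hF : ContDiff ℝ 2 F) {γ : ℝ → ℝ × ℝ × ℝ} {v : ℝ × ℝ × ℝ} (e : ℝ × ℝ × ℝ) {s : ℝ}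
    (hγ : HasDerivAt γ v s) :
    HasDerivAt (fun u => fderiv ℝ F (γ u) e) (fderiv ℝ (fderiv ℝ F) (γ s) v e) s := by
  have h1 : ContDiff ℝ 1 (fderiv ℝ F) := hF.fderiv_right (by norm_num)
  have h2 : HasDerivAt (fun u => fderiv ℝ F (γ u)) (fderiv ℝ (fderiv ℝ F) (γ s) v) s :=
    hasDerivAt_line_comp ((h1.differentiable one_ne_zero) (γ s)) hγ
  simpa using h2.clm_apply (hasDerivAt_const s e)

private lemma symm_second {F : ℝ × ℝ × ℝ → ℝ} (hF : ContDiff ℝ 2 F) (p v w : ℝ × ℝ × ℝ) :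
    fderiv ℝ (fderiv ℝ F) p v w = fderiv ℝ (fderiv ℝ F) p w v :=
  second_derivative_symmetric
    (fun q => ((hF.differentiable (by norm_num)) q).hasFDerivAt)
    (((hF.fderiv_right (by norm_num : (1:WithTop ℕ∞) + 1 ≤ 2)).differentiable one_ne_zero p).hasFDerivAt)
    v w

/-- equivalence of the conservative and nonconservative forms of the
surfactant continuity equation (Proposition 2.1, graph coordinates). -/
theorem continuity_equation_equivalence
    (h c f g : ℝ → ℝ → ℝ → ℝ)
    (hh : ContDiff ℝ 2 (fun p : ℝ × ℝ × ℝ => h p.1 p.2.1 p.2.2))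
    (hc : ContDiff ℝ 2 (fun p : ℝ × ℝ × ℝ => c p.1 p.2.1 p.2.2))
    (hf : ContDiff ℝ 2 (fun p : ℝ × ℝ × ℝ => f p.1 p.2.1 p.2.2))
    (hg : ContDiff ℝ 2 (fun p : ℝ × ℝ × ℝ => g p.1 p.2.1 p.2.2)) :
    ∀ x y t : ℝ,
      (pt (fun x y t => c x y t * Qarea h x y t) x y t
        + px (fun x y t => c x y t * Qarea h x y t * vOne h f x y t) x y t
        + py (fun x y t => c x y t * Qarea h x y t * vTwo h g x y t) x y t
      = Qarea h x y t *
          (pt c x y t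
            - (vN h x y t / Qarea h x y t)
                * (px c x y t * px h x y t + py c x y t * py h x y t)
            + vN h x y t * c x y t * meanCurv h x y t
            + (1 / Qarea h x y t) *
                (px (fun x y t => c x y t * Qarea h x y t * f x y t) x y t
                  + py (fun x y t => c x y t * Qarea h x y t * g x y t) x y t)))
      ∧
      ((pt (fun x y t => c x y t * Qarea h x y t) x y t
          + px (fun x y t => c x y t * Qarea h x y t * vOne h f x y t) x y t
          + py (fun x y t => c x y t * Qarea h x y t * vTwo h g x y t) x y t = 0)
        ↔
        (pt c x y t
          - (vN h x y t / Qarea h x y t)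
              * (px c x y t * px h x y t + py c x y t * py h x y t)
          + vN h x y t * c x y t * meanCurv h x y t
          + (1 / Qarea h x y t) *
              (px (fun x y t => c x y t * Qarea h x y t * f x y t) x y t
                + py (fun x y t => c x y t * Qarea h x y t * g x y t) x y t) = 0)) := by
  intro x y t
  set F : ℝ × ℝ × ℝ → ℝ := fun p => h p.1 p.2.1 p.2.2 with hFdef
  set Fc : ℝ × ℝ × ℝ → ℝ := fun p => c p.1 p.2.1 p.2.2 with hFcdef
  set Ff : ℝ × ℝ × ℝ → ℝ := fun p => f p.1 p.2.1 p.2.2 with hFfdef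
  set Fg : ℝ × ℝ × ℝ → ℝ := fun p => g p.1 p.2.1 p.2.2 with hFgdef
  have hhd : Differentiable ℝ F := hh.differentiable (by norm_num)
  have hcd : Differentiable ℝ Fc := hc.differentiable (by norm_num)
  have hfd : Differentiable ℝ Ff := hf.differentiable (by norm_num)
  have hgd : Differentiable ℝ Fg := hg.differentiable (by norm_num)
  set D : ℝ × ℝ × ℝ → ℝ × ℝ × ℝ → ℝ :=
    fun v w => fderiv ℝ (fderiv ℝ F) (x, y, t) v w with hDdef
  -- first partials of h as fderiv applications, everywhere
  have hpx : ∀ x' y' t', px h x' y' t' = fderiv ℝ F (x', y', t') (1, 0, 0) :=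
    fun x' y' t' => (hasDerivAt_line_comp (hhd _) (lineX y' t' x')).deriv
  have hpy : ∀ x' y' t', py h x' y' t' = fderiv ℝ F (x', y', t') (0, 1, 0) :=
    fun x' y' t' => (hasDerivAt_line_comp (hhd _) (lineY x' t' y')).deriv
  have hpt : ∀ x' y' t', pt h x' y' t' = fderiv ℝ F (x', y', t') (0, 0, 1) :=
    fun x' y' t' => (hasDerivAt_line_comp (hhd _) (lineT x' y' t')).deriv
  -- derivatives of the partials of h along coordinate lines at the point
  have hHx_x : HasDerivAt (fun x' => px h x' y t) (D (1,0,0) (1,0,0)) x := by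
    have hfun : (fun x' => px h x' y t) = fun x' => fderiv ℝ F (x', y, t) (1, 0, 0) := by
      funext x'; exact hpx x' y t
    rw [hfun]; exact hasDerivAt_fderiv_apply hh (1,0,0) (lineX y t x)
  have hHy_x : HasDerivAt (fun x' => py h x' y t) (D (1,0,0) (0,1,0)) x := by
    have hfun : (fun x' => py h x' y t) = fun x' => fderiv ℝ F (x', y, t) (0, 1, 0) := by
      funext x'; exact hpy x' y t
    rw [hfun]; exact hasDerivAt_fderiv_apply hh (0,1,0) (lineX y t x)
  have hHt_x : HasDerivAt (fun x' => pt h x' y t) (D (1,0,0) (0,0,1)) x := by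
    have hfun : (fun x' => pt h x' y t) = fun x' => fderiv ℝ F (x', y, t) (0, 0, 1) := by
      funext x'; exact hpt x' y t
    rw [hfun]; exact hasDerivAt_fderiv_apply hh (0,0,1) (lineX y t x)
  have hHx_y : HasDerivAt (fun y' => px h x y' t) (D (0,1,0) (1,0,0)) y := by
    have hfun : (fun y' => px h x y' t) = fun y' => fderiv ℝ F (x, y', t) (1, 0, 0) := by
      funext y'; exact hpx x y' t
    rw [hfun]; exact hasDerivAt_fderiv_apply hh (1,0,0) (lineY x t y)
  have hHy_y : HasDerivAt (fun y' => py h x y' t) (D (0,1,0) (0,1,0)) y := by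
    have hfun : (fun y' => py h x y' t) = fun y' => fderiv ℝ F (x, y', t) (0, 1, 0) := by
      funext y'; exact hpy x y' t
    rw [hfun]; exact hasDerivAt_fderiv_apply hh (0,1,0) (lineY x t y)
  have hHt_y : HasDerivAt (fun y' => pt h x y' t) (D (0,1,0) (0,0,1)) y := by
    have hfun : (fun y' => pt h x y' t) = fun y' => fderiv ℝ F (x, y', t) (0, 0, 1) := by
      funext y'; exact hpt x y' t
    rw [hfun]; exact hasDerivAt_fderiv_apply hh (0,0,1) (lineY x t y)
  have hHx_t : HasDerivAt (fun t' => px h x y t') (D (0,0,1) (1,0,0)) t := by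
    have hfun : (fun t' => px h x y t') = fun t' => fderiv ℝ F (x, y, t') (1, 0, 0) := by
      funext t'; exact hpx x y t'
    rw [hfun]; exact hasDerivAt_fderiv_apply hh (1,0,0) (lineT x y t)
  have hHy_t : HasDerivAt (fun t' => py h x y t') (D (0,0,1) (0,1,0)) t := by
    have hfun : (fun t' => py h x y t') = fun t' => fderiv ℝ F (x, y, t') (0, 1, 0) := by
      funext t'; exact hpy x y t'
    rw [hfun]; exact hasDerivAt_fderiv_apply hh (0,1,0) (lineT x y t)
  -- positivity of Q
  have hQpos : ∀ x' y' t', 0 < Qarea h x' y' t' := by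
    intro x' y' t'; rw [Qarea]; positivity
  have hq : Qarea h x y t ≠ 0 := (hQpos x y t).ne'
  -- derivatives of Q along coordinate lines
  have hQ_x : HasDerivAt (fun x' => Qarea h x' y t)
      ((2 * px h x y t * D (1,0,0) (1,0,0) + 2 * py h x y t * D (1,0,0) (0,1,0))
        / (2 * Qarea h x y t)) x := by
    have h1 : HasDerivAt (fun x' => 1 + px h x' y t ^ 2 + py h x' y t ^ 2)
        (2 * px h x y t * D (1,0,0) (1,0,0) + 2 * py h x y t * D (1,0,0) (0,1,0)) x :=
      (((hasDerivAt_const x (1:ℝ)).add (hHx_x.pow 2)).add (hHy_x.pow 2)).congr_d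
        (by norm_num)
    exact h1.sqrt (by show (1:ℝ) + px h x y t ^ 2 + py h x y t ^ 2 ≠ 0; positivity)
  have hQ_y : HasDerivAt (fun y' => Qarea h x y' t)
      ((2 * px h x y t * D (0,1,0) (1,0,0) + 2 * py h x y t * D (0,1,0) (0,1,0))
        / (2 * Qarea h x y t)) y := by
    have h1 : HasDerivAt (fun y' => 1 + px h x y' t ^ 2 + py h x y' t ^ 2)
        (2 * px h x y t * D (0,1,0) (1,0,0) + 2 * py h x y t * D (0,1,0) (0,1,0)) y :=
      (((hasDerivAt_const y (1:ℝ)).add (hHx_y.pow 2)).add (hHy_y.pow 2)).congr_d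
        (by norm_num)
    exact h1.sqrt (by show (1:ℝ) + px h x y t ^ 2 + py h x y t ^ 2 ≠ 0; positivity)
  have hQ_t : HasDerivAt (fun t' => Qarea h x y t')
      ((2 * px h x y t * D (0,0,1) (1,0,0) + 2 * py h x y t * D (0,0,1) (0,1,0))
        / (2 * Qarea h x y t)) t := by
    have h1 : HasDerivAt (fun t' => 1 + px h x y t' ^ 2 + py h x y t' ^ 2)
        (2 * px h x y t * D (0,0,1) (1,0,0) + 2 * py h x y t * D (0,0,1) (0,1,0)) t :=
      (((hasDerivAt_const t (1:ℝ)).add (hHx_t.pow 2)).add (hHy_t.pow 2)).congr_d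
        (by norm_num)
    exact h1.sqrt (by show (1:ℝ) + px h x y t ^ 2 + py h x y t ^ 2 ≠ 0; positivity)
  -- derivatives of c along coordinate lines
  have hC_x : HasDerivAt (fun x' => c x' y t) (fderiv ℝ Fc (x,y,t) (1,0,0)) x :=
    hasDerivAt_line_comp (hcd _) (lineX y t x)
  have hC_y : HasDerivAt (fun y' => c x y' t) (fderiv ℝ Fc (x,y,t) (0,1,0)) y :=
    hasDerivAt_line_comp (hcd _) (lineY x t y)
  have hC_t : HasDerivAt (fun t' => c x y t') (fderiv ℝ Fc (x,y,t) (0,0,1)) t :=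
    hasDerivAt_line_comp (hcd _) (lineT x y t)
  have hFx : DifferentiableAt ℝ (fun x' => f x' y t) x :=
    (hasDerivAt_line_comp (hfd ((x,y,t) : ℝ × ℝ × ℝ)) (lineX y t x)).differentiableAt
  have hGy : DifferentiableAt ℝ (fun y' => g x y' t) y :=
    (hasDerivAt_line_comp (hgd ((x,y,t) : ℝ × ℝ × ℝ)) (lineY x t y)).differentiableAt
  -- symmetry of second derivatives
  have S21 : D (0,1,0) (1,0,0) = D (1,0,0) (0,1,0) := symm_second hh (x,y,t) _ _
  have S31 : D (0,0,1) (1,0,0) = D (1,0,0) (0,0,1) := symm_second hh (x,y,t) _ _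
  have S32 : D (0,0,1) (0,1,0) = D (0,1,0) (0,0,1) := symm_second hh (x,y,t) _ _
  -- the seven evaluation lemmas
  have E1 : pt (fun x y t => c x y t * Qarea h x y t) x y t
      = fderiv ℝ Fc (x,y,t) (0,0,1) * Qarea h x y t
        + c x y t * ((2 * px h x y t * D (0,0,1) (1,0,0) + 2 * py h x y t * D (0,0,1) (0,1,0))
          / (2 * Qarea h x y t)) :=
    (hC_t.mul hQ_t).deriv
  have hfun1 : (fun x' => c x' y t * Qarea h x' y t * vOne h f x' y t)
      = fun x' => -(c x' y t * px h x' y t * pt h x' y t / Qarea h x' y t)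
          + c x' y t * Qarea h x' y t * f x' y t := by
    funext x'
    have hq' := (hQpos x' y t).ne'
    simp only [vOne, vN]
    field_simp
  have E2 : px (fun x y t => c x y t * Qarea h x y t * vOne h f x y t) x y t
      = -((((fderiv ℝ Fc (x,y,t) (1,0,0) * px h x y t + c x y t * D (1,0,0) (1,0,0)) * pt h x y t
            + c x y t * px h x y t * D (1,0,0) (0,0,1)) * Qarea h x y t
          - c x y t * px h x y t * pt h x y t
            * ((2 * px h x y t * D (1,0,0) (1,0,0) + 2 * py h x y t * D (1,0,0) (0,1,0))
                / (2 * Qarea h x y t))) / Qarea h x y t ^ 2)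
        + px (fun x y t => c x y t * Qarea h x y t * f x y t) x y t := by
    show deriv (fun x' => c x' y t * Qarea h x' y t * vOne h f x' y t) x = _
    rw [hfun1]
    have part1 := ((hC_x.mul hHx_x).mul hHt_x).div hQ_x hq
    have hA : HasDerivAt (fun x' => c x' y t * Qarea h x' y t * f x' y t)
        (px (fun x y t => c x y t * Qarea h x y t * f x y t) x y t) x :=
      ((hC_x.differentiableAt.mul hQ_x.differentiableAt).mul hFx).hasDerivAt
    exact (part1.neg.add hA).deriv
  have hfun2 : (fun y' => c x y' t * Qarea h x y' t * vTwo h g x y' t)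
      = fun y' => -(c x y' t * py h x y' t * pt h x y' t / Qarea h x y' t)
          + c x y' t * Qarea h x y' t * g x y' t := by
    funext y'
    have hq' := (hQpos x y' t).ne'
    simp only [vTwo, vN]
    field_simp
  have E3 : py (fun x y t => c x y t * Qarea h x y t * vTwo h g x y t) x y t
      = -((((fderiv ℝ Fc (x,y,t) (0,1,0) * py h x y t + c x y t * D (0,1,0) (0,1,0)) * pt h x y t
            + c x y t * py h x y t * D (0,1,0) (0,0,1)) * Qarea h x y t
          - c x y t * py h x y t * pt h x y t
            * ((2 * px h x y t * D (0,1,0) (1,0,0) + 2 * py h x y t * D (0,1,0) (0,1,0))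
                / (2 * Qarea h x y t))) / Qarea h x y t ^ 2)
        + py (fun x y t => c x y t * Qarea h x y t * g x y t) x y t := by
    show deriv (fun y' => c x y' t * Qarea h x y' t * vTwo h g x y' t) y = _
    rw [hfun2]
    have part1 := ((hC_y.mul hHy_y).mul hHt_y).div hQ_y hq
    have hB : HasDerivAt (fun y' => c x y' t * Qarea h x y' t * g x y' t)
        (py (fun x y t => c x y t * Qarea h x y t * g x y t) x y t) y :=
      ((hC_y.differentiableAt.mul hQ_y.differentiableAt).mul hGy).hasDerivAt
    exact (part1.neg.add hB).deriv
  have E4 : pt c x y t = fderiv ℝ Fc (x,y,t) (0,0,1) := hC_t.deriv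
  have E5 : px c x y t = fderiv ℝ Fc (x,y,t) (1,0,0) := hC_x.deriv
  have E6 : py c x y t = fderiv ℝ Fc (x,y,t) (0,1,0) := hC_y.deriv
  have Ma : px (fun x y t => px h x y t / Qarea h x y t) x y t
      = (D (1,0,0) (1,0,0) * Qarea h x y t
          - px h x y t * ((2 * px h x y t * D (1,0,0) (1,0,0) + 2 * py h x y t * D (1,0,0) (0,1,0))
              / (2 * Qarea h x y t))) / Qarea h x y t ^ 2 :=
    (hHx_x.div hQ_x hq).deriv
  have Mb : py (fun x y t => py h x y t / Qarea h x y t) x y t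
      = (D (0,1,0) (0,1,0) * Qarea h x y t
          - py h x y t * ((2 * px h x y t * D (0,1,0) (1,0,0) + 2 * py h x y t * D (0,1,0) (0,1,0))
              / (2 * Qarea h x y t))) / Qarea h x y t ^ 2 :=
    (hHy_y.div hQ_y hq).deriv
  have main : pt (fun x y t => c x y t * Qarea h x y t) x y t
        + px (fun x y t => c x y t * Qarea h x y t * vOne h f x y t) x y t
        + py (fun x y t => c x y t * Qarea h x y t * vTwo h g x y t) x y t
      = Qarea h x y t *
          (pt c x y t
            - (vN h x y t / Qarea h x y t)
                * (px c x y t * px h x y t + py c x y t * py h x y t)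
            + vN h x y t * c x y t * meanCurv h x y t
            + (1 / Qarea h x y t) *
                (px (fun x y t => c x y t * Qarea h x y t * f x y t) x y t
                  + py (fun x y t => c x y t * Qarea h x y t * g x y t) x y t)) := by
    rw [E1, E2, E3]
    simp only [vN, meanCurv]
    rw [Ma, Mb, E4, E5, E6, S31, S32, S21]
    field_simp
    ring
  refine ⟨main, ?_⟩
  rw [main]
  constructor
  · intro h0
    rcases mul_eq_zero.mp h0 with h1 | h1
    · exact absurd h1 hq
    · exact h1
  · intro h0
    rw [h0, mul_zero]
end

section
/- Let h_x, h_y ∈ ℝ, Q := √(1 + h_x² + h_y²), and n := (−h_x, −h_y, 1)/Q ∈ ℝ³. For any G = (G₁, G₂, G₃) ∈ ℝ³, set c_x := G₁ + G₃·h_x, c_y := G₂ + G₃·h_y, and M := I₂ + (−h_y, h_x)ᵀ(−h_y, h_x). Then ‖G − (n·G)·n‖² = ((c_x, c_y)·M·(c_x, c_y)) / Q², i.e. the squared norm of the tangential part of G equals (∇c·M∇c)/(1+|∇h|²). -/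
open Matrix

/-- the unit normal `n = (−h_x, −h_y, 1)/√(1+h_x²+h_y²)` of the graph of `h` -/
noncomputable def nvec (hx hy : ℝ) : Fin 3 → ℝ :=
  (1 / Real.sqrt (1 + hx ^ 2 + hy ^ 2)) • ![-hx, -hy, 1]

set_option maxHeartbeats 1600000 in
/-- with `c_x = G₁ + G₃h_x`, `c_y = G₂ + G₃h_y` and
`M = I + (−h_y,h_x)ᵀ(−h_y,h_x)`, the squared (Euclidean) norm of the tangential part
of `G` equals `(∇c·M∇c)/(1+|∇h|²)`. -/
theorem surface_gradient_norm
    (hx hy : ℝ) (G : Fin 3 → ℝ) :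
    (G - (nvec hx hy ⬝ᵥ G) • nvec hx hy) ⬝ᵥ (G - (nvec hx hy ⬝ᵥ G) • nvec hx hy)
      = (![G 0 + G 2 * hx, G 1 + G 2 * hy] ⬝ᵥ
          Matrix.mulVec
            ((1 : Matrix (Fin 2) (Fin 2) ℝ) + Matrix.vecMulVec ![-hy, hx] ![-hy, hx])
            ![G 0 + G 2 * hx, G 1 + G 2 * hy])
        / (Real.sqrt (1 + hx ^ 2 + hy ^ 2)) ^ 2 := by
  have hpos : (0:ℝ) < 1 + hx ^ 2 + hy ^ 2 := by positivity
  have hQ2 : (Real.sqrt (1 + hx ^ 2 + hy ^ 2)) ^ 2 = 1 + hx ^ 2 + hy ^ 2 :=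
    Real.sq_sqrt hpos.le
  have hQne : Real.sqrt (1 + hx ^ 2 + hy ^ 2) ≠ 0 := by positivity
  simp only [nvec, dotProduct, mulVec, vecMulVec, Matrix.one_apply, Fin.sum_univ_three,
    Fin.sum_univ_two, Pi.sub_apply, Pi.smul_apply, Matrix.add_apply, Matrix.of_apply,
    Matrix.cons_val_zero, Matrix.cons_val_one, Matrix.head_cons, Matrix.cons_val_two,
    Matrix.tail_cons, smul_eq_mul, if_true, if_false]
  norm_num
  have h4 : (Real.sqrt (1 + hx ^ 2 + hy ^ 2)) ^ 4 = (1 + hx ^ 2 + hy ^ 2) ^ 2 := by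
    rw [show (4:ℕ) = 2*2 by rfl, pow_mul, hQ2]
  field_simp
  ring_nf
  simp only [hQ2, h4]
  ring
end

section
/- Let h, c : ℝ × ℝ → ℝ, (x,t) ↦ h(x,t), c(x,t), be sufficiently smooth (h of class C³ in x and C¹ in t with mixed partials, c of class C²), let e : ℝ → ℝ be C², let D ≥ 0, and define γ(c) := e(c) − c·e'(c), Q := √(1 + h_x²), v_n := h_t/Q, H := −h_{xx}/Q³. Suppose c satisfies the surfactant transport equation c_t − v_n·∂_x(c·h_x/Q) = (D/Q)·∂_x(c_x/Q) at a point. Then at that point: ∂_t(e(c)·Q) − γ(c)·H·h_t − ∂_x(e(c)·h_t·h_x/Q) = D·e'(c)·∂_x(c_x/Q). -/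
/-- partial derivative in the space variable `x` -/
noncomputable def px1 (f : ℝ → ℝ → ℝ) (x t : ℝ) : ℝ := deriv (fun x' => f x' t) x

/-- partial derivative in the time variable `t` -/
noncomputable def pt1 (f : ℝ → ℝ → ℝ) (x t : ℝ) : ℝ := deriv (fun t' => f x t') t

/-- second partial derivative in `x` -/
noncomputable def pxx1 (f : ℝ → ℝ → ℝ) (x t : ℝ) : ℝ := deriv (fun x' => px1 f x' t) x

/-- the arclength element `Q = √(1 + h_x²)` -/
noncomputable def Qarc (h : ℝ → ℝ → ℝ) (x t : ℝ) : ℝ := Real.sqrt (1 + px1 h x t ^ 2)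

/-- pointwise energy law (ttt) on the 2D capillary curve: if the surfactant
transport equation `c_t − v_n·∂_x(c·h_x/Q) = (D/Q)·∂_x(c_x/Q)` holds at a point, then
`∂_t(e(c)Q) − γ(c)·H·h_t − ∂_x(e(c)·h_t·h_x/Q) = D·e'(c)·∂_x(c_x/Q)` there,
where `γ(c) = e(c) − c·e'(c)` and `H = −h_xx/Q³`. -/
theorem energy_law_capillary_curve
    (h c : ℝ → ℝ → ℝ) (e : ℝ → ℝ) (D : ℝ) (hD : 0 ≤ D)
    (hh : ContDiff ℝ 3 (fun p : ℝ × ℝ => h p.1 p.2))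
    (hc : ContDiff ℝ 2 (fun p : ℝ × ℝ => c p.1 p.2))
    (he : ContDiff ℝ 2 e)
    (x t : ℝ)
    (heq : pt1 c x t
        - (pt1 h x t / Qarc h x t) *
            px1 (fun x t => c x t * px1 h x t / Qarc h x t) x t
      = (D / Qarc h x t) * px1 (fun x t => px1 c x t / Qarc h x t) x t) :
    pt1 (fun x t => e (c x t) * Qarc h x t) x t
      - (e (c x t) - c x t * deriv e (c x t))
          * (-pxx1 h x t / Qarc h x t ^ 3) * pt1 h x t
      - px1 (fun x t => e (c x t) * pt1 h x t * px1 h x t / Qarc h x t) x t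
    = D * deriv e (c x t) * px1 (fun x t => px1 c x t / Qarc h x t) x t := by
  set H2 : ℝ × ℝ → ℝ := fun p => h p.1 p.2 with hH2
  set C2 : ℝ × ℝ → ℝ := fun p => c p.1 p.2 with hC2
  have hhd : Differentiable ℝ H2 := hh.differentiable (by norm_num)
  have hcd : Differentiable ℝ C2 := hc.differentiable (by norm_num)
  have hh' : ContDiff ℝ 2 (fderiv ℝ H2) := hh.fderiv_right (by norm_num)
  have lineX : ∀ (x' t' : ℝ), HasDerivAt (fun u : ℝ => (u, t')) ((1:ℝ),(0:ℝ)) x' :=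
    fun x' t' => (hasDerivAt_id x').prodMk (hasDerivAt_const x' t')
  have lineT : ∀ (x' t' : ℝ), HasDerivAt (fun u : ℝ => (x', u)) ((0:ℝ),(1:ℝ)) t' :=
    fun x' t' => (hasDerivAt_const t' x').prodMk (hasDerivAt_id t')
  have hpx : ∀ x' t', px1 h x' t' = fderiv ℝ H2 (x', t') (1, 0) := fun x' t' =>
    by have := ((hhd (x', t')).hasFDerivAt.comp_hasDerivAt x' (lineX x' t')).deriv; exact this
  have hpt : ∀ x' t', pt1 h x' t' = fderiv ℝ H2 (x', t') (0, 1) := fun x' t' =>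
    ((hhd (x', t')).hasFDerivAt.comp_hasDerivAt t' (lineT x' t')).deriv
  set F'' := fderiv ℝ (fderiv ℝ H2) (x, t) with hF''def
  have hF''d : HasFDerivAt (fderiv ℝ H2) F'' (x, t) :=
    (hh'.differentiable (by norm_num) (x, t)).hasFDerivAt
  have hsym : F'' (0,1) (1,0) = F'' (1,0) (0,1) :=
    second_derivative_symmetric (fun y => (hhd y).hasFDerivAt) hF''d _ _
  have hHx_t : HasDerivAt (fun t' => fderiv ℝ H2 (x, t') (1,0)) (F'' (1,0) (0,1)) t := by
    have h1 : HasDerivAt (fun t' => fderiv ℝ H2 (x, t')) (F'' (0,1)) t :=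
      hF''d.comp_hasDerivAt t (lineT x t)
    simpa [hsym] using h1.clm_apply (hasDerivAt_const t ((1:ℝ),(0:ℝ)))
  have hHx_x : HasDerivAt (fun x' => fderiv ℝ H2 (x', t) (1,0)) (F'' (1,0) (1,0)) x := by
    have h1 : HasDerivAt (fun x' => fderiv ℝ H2 (x', t)) (F'' (1,0)) x :=
      hF''d.comp_hasDerivAt x (lineX x t)
    simpa using h1.clm_apply (hasDerivAt_const x ((1:ℝ),(0:ℝ)))
  have hHt_x : HasDerivAt (fun x' => fderiv ℝ H2 (x', t) (0,1)) (F'' (1,0) (0,1)) x := by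
    have h1 : HasDerivAt (fun x' => fderiv ℝ H2 (x', t)) (F'' (1,0)) x :=
      hF''d.comp_hasDerivAt x (lineX x t)
    simpa using h1.clm_apply (hasDerivAt_const x ((0:ℝ),(1:ℝ)))
  have hq0 : Real.sqrt (1 + fderiv ℝ H2 (x, t) (1, 0) ^ 2) ≠ 0 := by positivity
  have hQx := ((hasDerivAt_const x (1:ℝ)).fun_add (hHx_x.fun_pow 2)).sqrt (by positivity)
  have hQt := ((hasDerivAt_const t (1:ℝ)).fun_add (hHx_t.fun_pow 2)).sqrt (by positivity)
  -- c and e slices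
  have hct : HasDerivAt (fun t' => c x t') (pt1 c x t) t :=
    ((hcd (x, t)).hasFDerivAt.comp_hasDerivAt t (lineT x t)).differentiableAt.hasDerivAt
  have hcx : HasDerivAt (fun x' => c x' t) (px1 c x t) x :=
    by have := ((hcd (x, t)).hasFDerivAt.comp_hasDerivAt x (lineX x t)).differentiableAt.hasDerivAt; exact this
  have heD : HasDerivAt e (deriv e (c x t)) (c x t) :=
    (he.differentiable (by norm_num) (c x t)).hasDerivAt
  have het : HasDerivAt (fun t' => e (c x t')) (deriv e (c x t) * pt1 c x t) t :=
    heD.comp t hct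
  have hex : HasDerivAt (fun x' => e (c x' t)) (deriv e (c x t) * px1 c x t) x :=
    heD.comp x hcx
  have d1 := (het.fun_mul hQt).deriv
  have d2 := (((hex.fun_mul hHt_x).fun_mul hHx_x).fun_div hQx hq0).deriv
  have d3 := ((hcx.fun_mul hHx_x).fun_div hQx hq0).deriv
  simp only [Qarc, pxx1] at heq ⊢
  simp only [hpx, hpt] at heq ⊢
  simp only [px1, pt1] at heq ⊢
  rw [d3] at heq
  rw [d1, d2, hHx_x.deriv]
  simp only [px1, pt1] at heq ⊢
  set A := c x t with hA
  set E := e A with hE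
  set E' := deriv e A with hE'
  set Hx := (fderiv ℝ H2 (x, t)) (1, 0) with hHx
  set Ht := (fderiv ℝ H2 (x, t)) (0, 1) with hHt
  set B := (F'' (1, 0)) (1, 0) with hB
  set M := (F'' (1, 0)) (0, 1) with hM
  set q := Real.sqrt (1 + Hx ^ 2) with hqd
  set cx := deriv (fun x' => c x' t) x with hcx'
  set ct := deriv (fun t' => c x t') t with hct'
  set R := deriv (fun x' => deriv (fun x' => c x' t) x' / Real.sqrt (1 + (fderiv ℝ H2 (x', t)) (1, 0) ^ 2)) x with hR
  have hq0' : q ≠ 0 := hq0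
  have hq2 : q ^ 2 = 1 + Hx ^ 2 := Real.sq_sqrt (by positivity)
  clear_value A E E' Hx Ht B M q cx ct R
  field_simp at heq ⊢
  linear_combination E' * heq + (-2 * Ht * B * (E - A * E')) * hq2
end

section
/- Let a, b : ℝ → ℝ be C¹ with a(t) < b(t) for all t, let w : ℝ → ℝ be C¹ (the substrate profile), and let h, c : ℝ × ℝ → ℝ be sufficiently smooth functions such that h(a(t), t) = w(a(t)) and h(b(t), t) = w(b(t)) for all t. Set Q := √(1 + h_x²), v_n := h_t/Q, and let D ≥ 0. Suppose that for every t and every x ∈ [a(t), b(t)] the surfactant equation c_t − v_n·∂_x(c·h_x/Q) = (D/Q)·∂_x(c_x/Q) holds. Then for every t, d/dt ∫_{a(t)}^{b(t)} c·√(1 + h_x²) dx = cos θ_b·[D·c_x + c·(1 + h_x·w_x)·b'(t)]|_{x=b(t)} − cos θ_a·[D·c_x + c·(1 + h_x·w_x)·a'(t)]|_{x=a(t)}, where cos θ_a = 1/√(1 + h_x²)|_{x=a(t)} and cos θ_b = 1/√(1 + h_x²)|_{x=b(t)}. -/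
open intervalIntegral

section Helpers

variable {f : ℝ → ℝ → ℝ}

lemma hasDerivAt_px (hf : ContDiff ℝ (⊤ : ℕ∞) (fun p : ℝ × ℝ => f p.1 p.2)) (x t : ℝ) :
    HasDerivAt (fun x' => f x' t) (fderiv ℝ (fun p : ℝ × ℝ => f p.1 p.2) (x, t) (1, 0)) x := by
  have hF : HasFDerivAt (fun p : ℝ × ℝ => f p.1 p.2)
      (fderiv ℝ (fun p : ℝ × ℝ => f p.1 p.2) (x, t)) (x, t) :=
    (hf.differentiable (by simp) _).hasFDerivAt
  have hι : HasDerivAt (fun x' : ℝ => (x', t)) ((1 : ℝ), (0 : ℝ)) x :=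
    (hasDerivAt_id x).prodMk (hasDerivAt_const x t)
  exact hF.comp_hasDerivAt x hι

lemma hasDerivAt_pt (hf : ContDiff ℝ (⊤ : ℕ∞) (fun p : ℝ × ℝ => f p.1 p.2)) (x t : ℝ) :
    HasDerivAt (fun t' => f x t') (fderiv ℝ (fun p : ℝ × ℝ => f p.1 p.2) (x, t) (0, 1)) t := by
  have hF : HasFDerivAt (fun p : ℝ × ℝ => f p.1 p.2)
      (fderiv ℝ (fun p : ℝ × ℝ => f p.1 p.2) (x, t)) (x, t) :=
    (hf.differentiable (by simp) _).hasFDerivAt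
  have hι : HasDerivAt (fun t' : ℝ => (x, t')) ((0 : ℝ), (1 : ℝ)) t :=
    (hasDerivAt_const t x).prodMk (hasDerivAt_id t)
  exact hF.comp_hasDerivAt t hι

lemma px1_eq (hf : ContDiff ℝ (⊤ : ℕ∞) (fun p : ℝ × ℝ => f p.1 p.2)) (x t : ℝ) :
    px1 f x t = fderiv ℝ (fun p : ℝ × ℝ => f p.1 p.2) (x, t) (1, 0) :=
  (hasDerivAt_px hf x t).deriv

lemma pt1_eq (hf : ContDiff ℝ (⊤ : ℕ∞) (fun p : ℝ × ℝ => f p.1 p.2)) (x t : ℝ) :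
    pt1 f x t = fderiv ℝ (fun p : ℝ × ℝ => f p.1 p.2) (x, t) (0, 1) :=
  (hasDerivAt_pt hf x t).deriv

lemma hasDerivAt_px1 (hf : ContDiff ℝ (⊤ : ℕ∞) (fun p : ℝ × ℝ => f p.1 p.2)) (x t : ℝ) :
    HasDerivAt (fun x' => f x' t) (px1 f x t) x := by
  rw [px1_eq hf x t]; exact hasDerivAt_px hf x t

lemma hasDerivAt_pt1 (hf : ContDiff ℝ (⊤ : ℕ∞) (fun p : ℝ × ℝ => f p.1 p.2)) (x t : ℝ) :
    HasDerivAt (fun t' => f x t') (pt1 f x t) t := by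
  rw [pt1_eq hf x t]; exact hasDerivAt_pt hf x t

lemma contDiff_fderiv_apply (hf : ContDiff ℝ (⊤ : ℕ∞) (fun p : ℝ × ℝ => f p.1 p.2)) (v : ℝ × ℝ) :
    ContDiff ℝ (⊤ : ℕ∞) (fun p : ℝ × ℝ => fderiv ℝ (fun p : ℝ × ℝ => f p.1 p.2) p v) :=
  (hf.fderiv_right (by simp)).clm_apply contDiff_const

lemma contDiff_px1 (hf : ContDiff ℝ (⊤ : ℕ∞) (fun p : ℝ × ℝ => f p.1 p.2)) :
    ContDiff ℝ (⊤ : ℕ∞) (fun p : ℝ × ℝ => px1 f p.1 p.2) := by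
  have he : (fun p : ℝ × ℝ => px1 f p.1 p.2)
      = fun p : ℝ × ℝ => fderiv ℝ (fun p : ℝ × ℝ => f p.1 p.2) p (1, 0) :=
    funext fun p => px1_eq hf p.1 p.2
  rw [he]; exact contDiff_fderiv_apply hf (1, 0)

lemma contDiff_pt1 (hf : ContDiff ℝ (⊤ : ℕ∞) (fun p : ℝ × ℝ => f p.1 p.2)) :
    ContDiff ℝ (⊤ : ℕ∞) (fun p : ℝ × ℝ => pt1 f p.1 p.2) := by
  have he : (fun p : ℝ × ℝ => pt1 f p.1 p.2)
      = fun p : ℝ × ℝ => fderiv ℝ (fun p : ℝ × ℝ => f p.1 p.2) p (0, 1) :=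
    funext fun p => pt1_eq hf p.1 p.2
  rw [he]; exact contDiff_fderiv_apply hf (0, 1)

lemma fderiv_apply_const (hf : ContDiff ℝ (⊤ : ℕ∞) (fun p : ℝ × ℝ => f p.1 p.2)) (q v w : ℝ × ℝ) :
    fderiv ℝ (fun p : ℝ × ℝ => fderiv ℝ (fun p : ℝ × ℝ => f p.1 p.2) p v) q w
      = fderiv ℝ (fderiv ℝ (fun p : ℝ × ℝ => f p.1 p.2)) q w v := by
  set F := fun p : ℝ × ℝ => f p.1 p.2
  have hdc : DifferentiableAt ℝ (fderiv ℝ F) q :=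
    ((hf.fderiv_right (m := (⊤ : ℕ∞)) (by simp)).differentiable (by simp)) q
  have := fderiv_clm_apply hdc (differentiableAt_const v)
  rw [this]
  simp

/-- symmetry of mixed partial derivatives for a smooth function of two real variables -/
lemma mixed_symm (hf : ContDiff ℝ (⊤ : ℕ∞) (fun p : ℝ × ℝ => f p.1 p.2)) (x t : ℝ) :
    px1 (fun x t => pt1 f x t) x t = pt1 (fun x t => px1 f x t) x t := by
  set F := fun p : ℝ × ℝ => f p.1 p.2 with hF
  have h1 : px1 (fun x t => pt1 f x t) x t
      = fderiv ℝ (fun p : ℝ × ℝ => fderiv ℝ F p (0, 1)) (x, t) (1, 0) := by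
    rw [px1_eq (contDiff_pt1 hf) x t,
      show (fun p : ℝ × ℝ => (fun x t => pt1 f x t) p.1 p.2)
          = fun p : ℝ × ℝ => fderiv ℝ F p (0, 1) from funext fun p => pt1_eq hf p.1 p.2]
  have h2 : pt1 (fun x t => px1 f x t) x t
      = fderiv ℝ (fun p : ℝ × ℝ => fderiv ℝ F p (1, 0)) (x, t) (0, 1) := by
    rw [pt1_eq (contDiff_px1 hf) x t,
      show (fun p : ℝ × ℝ => (fun x t => px1 f x t) p.1 p.2)
          = fun p : ℝ × ℝ => fderiv ℝ F p (1, 0) from funext fun p => px1_eq hf p.1 p.2]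
  rw [h1, h2, fderiv_apply_const hf, fderiv_apply_const hf]
  have hdf : ∀ y, HasFDerivAt F (fderiv ℝ F y) y := fun y =>
    ((hf.differentiable (by simp)) y).hasFDerivAt
  have hdd : HasFDerivAt (fderiv ℝ F) (fderiv ℝ (fderiv ℝ F) (x, t)) (x, t) :=
    (((hf.fderiv_right (m := (⊤ : ℕ∞)) (by simp)).differentiable (by simp)) (x, t)).hasFDerivAt
  exact second_derivative_symmetric hdf hdd _ _

/-- Leibniz rule for an integral with one moving endpoint and a smooth parameter-dependent
integrand. -/
lemma leibniz_one (hg : ContDiff ℝ (⊤ : ℕ∞) (fun p : ℝ × ℝ => f p.1 p.2))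
    {e : ℝ → ℝ} (he : ContDiff ℝ 1 e) (x0 t0 : ℝ) :
    HasDerivAt (fun s => ∫ x in x0..e s, f x s)
      (f (e t0) t0 * deriv e t0 + ∫ x in x0..e t0, pt1 f x t0) t0 := by
  have gc : Continuous fun p : ℝ × ℝ => f p.1 p.2 := hg.continuous
  have hcont : ∀ s, Continuous fun x => f x s := fun s =>
    gc.comp (continuous_id.prodMk continuous_const)
  have hcont' : ∀ s, Continuous fun x => f x s - f x t0 := fun s =>
    (hcont s).sub (hcont t0)
  have ptc : Continuous fun p : ℝ × ℝ => pt1 f p.1 p.2 := (contDiff_pt1 hg).continuous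
  have ptc1 : ∀ s, Continuous fun x => pt1 f x s := fun s =>
    ptc.comp (continuous_id.prodMk continuous_const)
  obtain ⟨C, hC⟩ := (isCompact_Icc (a := t0 - 1) (b := t0 + 1)).exists_bound_of_continuousOn
    he.continuous.continuousOn
  set R : ℝ := |x0| + |C| + 1 with hR
  set K : Set (ℝ × ℝ) := Set.Icc (-R) R ×ˢ Set.Icc (t0 - 1) (t0 + 1) with hK
  have hKc : IsCompact K := (isCompact_Icc).prod isCompact_Icc
  obtain ⟨M, hM⟩ := hKc.exists_bound_of_continuousOn ptc.continuousOn
  have hR0 : 0 < R := by rw [hR]; positivity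
  have hM0 : 0 ≤ M := le_trans (norm_nonneg _)
    (hM (0, t0) ⟨⟨by simp; linarith, by simp; linarith⟩, by constructor <;> linarith⟩)
  have heR : ∀ s ∈ Set.Icc (t0 - 1) (t0 + 1), |e s| ≤ R := by
    intro s hs
    have := hC s hs
    rw [Real.norm_eq_abs] at this
    have := le_abs_self C
    rw [hR]
    linarith [abs_nonneg x0]
  have hmem : ∀ u v : ℝ, |u| ≤ R → |v| ≤ R → ∀ x ∈ Set.uIoc u v, x ∈ Set.Icc (-R) R := by
    intro u v hu hv x hx
    rcases Set.mem_uIoc.1 hx with h | h <;>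
      constructor <;>
      [ (rw [abs_le] at hu; linarith [h.1]); (rw [abs_le] at hv; linarith [h.2]);
        (rw [abs_le] at hv; linarith [h.1]); (rw [abs_le] at hu; linarith [h.2])]
  set P1 : ℝ → ℝ := fun s => ∫ x in x0..e s, f x t0 with hP1
  set P2 : ℝ → ℝ := fun s => ∫ x in x0..e t0, (f x s - f x t0) with hP2
  set P3 : ℝ → ℝ := fun s => ∫ x in e t0..e s, (f x s - f x t0) with hP3
  have hsplit : (fun s => ∫ x in x0..e s, f x s) = fun s => P1 s + P2 s + P3 s := by
    funext s
    have h23 : P2 s + P3 s = ∫ x in x0..e s, (f x s - f x t0) :=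
      integral_add_adjacent_intervals ((hcont' s).intervalIntegrable _ _)
        ((hcont' s).intervalIntegrable _ _)
    have h1 : P1 s + (P2 s + P3 s) = ∫ x in x0..e s, f x s := by
      rw [h23, hP1]
      rw [← integral_add ((hcont t0).intervalIntegrable _ _) ((hcont' s).intervalIntegrable _ _)]
      congr 1; funext x; ring
    linarith [h1]
  have heD : HasDerivAt e (deriv e t0) t0 :=
    ((he.differentiable one_ne_zero) t0).hasDerivAt
  have hd1 : HasDerivAt P1 (f (e t0) t0 * deriv e t0) t0 := by
    have := ((hcont t0).integral_hasStrictDerivAt x0 (e t0)).hasDerivAt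
    exact this.comp t0 heD
  have hd2 : HasDerivAt P2 (∫ x in x0..e t0, pt1 f x t0) t0 := by
    have het0 : |e t0| ≤ R := heR t0 (by constructor <;> linarith)
    have hx0R : |x0| ≤ R := by rw [hR]; linarith [abs_nonneg C]
    have key := hasDerivAt_integral_of_dominated_loc_of_deriv_le
      (F := fun s x => f x s - f x t0) (F' := fun s x => pt1 f x s)
      (μ := MeasureTheory.volume) (x₀ := t0) (a := x0) (b := e t0) (bound := fun _ => M)
      (s := Metric.ball t0 (1/2))
      (Metric.ball_mem_nhds _ (by norm_num))
      (Filter.Eventually.of_forall fun s => ((hcont' s).aestronglyMeasurable))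
      (((hcont' t0)).intervalIntegrable _ _)
      ((ptc1 t0).aestronglyMeasurable)
      (Filter.Eventually.of_forall fun x hx => ?_)
      (intervalIntegrable_const)
      (Filter.Eventually.of_forall fun x hx => ?_)
    · exact key.2
    · intro s hs
      have hsI : s ∈ Set.Icc (t0 - 1) (t0 + 1) := by
        have := Metric.mem_ball.1 hs
        rw [Real.dist_eq, abs_lt] at this
        constructor <;> linarith
      exact hM (x, s) ⟨hmem x0 (e t0) hx0R het0 x hx, hsI⟩
    · intro s _
      exact ((hasDerivAt_pt1 hg x s).sub_const (f x t0))
  have hd3 : HasDerivAt P3 0 t0 := by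
    rw [hasDerivAt_iff_isLittleO]
    have hP3t0 : P3 t0 = 0 := by rw [hP3]; simp
    rw [Asymptotics.isLittleO_iff]
    intro ε hε
    set Ke : ℝ := |deriv e t0| + 1 with hKe_def
    have hKe0 : 0 < Ke := by positivity
    have hKe : ∀ᶠ s in nhds t0, |e s - e t0| ≤ Ke * |s - t0| := by
      have h1 := (hasDerivAt_iff_isLittleO.1 heD)
      have h2 := (Asymptotics.isLittleO_iff.1 h1) one_pos
      filter_upwards [h2] with s hs
      have : |e s - e t0 - (s - t0) * deriv e t0| ≤ |s - t0| := by
        simpa [Real.norm_eq_abs, smul_eq_mul] using hs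
      calc |e s - e t0| ≤ |e s - e t0 - (s - t0) * deriv e t0| + |(s - t0) * deriv e t0| := by
            have h3 := abs_add_le (e s - e t0 - (s - t0) * deriv e t0) ((s - t0) * deriv e t0)
            calc |e s - e t0| = |(e s - e t0 - (s - t0) * deriv e t0) + (s - t0) * deriv e t0| := by
                  ring_nf
              _ ≤ _ := h3
        _ ≤ |s - t0| + |s - t0| * |deriv e t0| := by
            rw [abs_mul]; linarith
        _ ≤ Ke * |s - t0| := by rw [hKe_def]; ring_nf; nlinarith [abs_nonneg (s - t0)]
    set δ : ℝ := min 1 (ε / (M * Ke + 1)) with hδ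
    have hδ0 : 0 < δ := by
      apply lt_min one_pos
      positivity
    have hball : ∀ᶠ s in nhds t0, s ∈ Metric.ball t0 δ := Metric.ball_mem_nhds t0 hδ0
    filter_upwards [hKe, hball] with s hs1 hs2
    have hst : |s - t0| < δ := by
      have := Metric.mem_ball.1 hs2
      rwa [Real.dist_eq] at this
    have hst1 : |s - t0| ≤ 1 := le_of_lt (lt_of_lt_of_le hst (min_le_left _ _))
    have hst2 : |s - t0| ≤ ε / (M * Ke + 1) := le_of_lt (lt_of_lt_of_le hst (min_le_right _ _))
    have hsI : s ∈ Set.Icc (t0 - 1) (t0 + 1) := by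
      rw [abs_le] at hst1; constructor <;> linarith [hst1.1, hst1.2]
    have ht0I : t0 ∈ Set.Icc (t0 - 1) (t0 + 1) := by constructor <;> linarith
    have hesR : |e s| ≤ R := heR s hsI
    have het0R : |e t0| ≤ R := heR t0 ht0I
    have hint : ∀ x ∈ Set.uIoc (e t0) (e s), ‖f x s - f x t0‖ ≤ M * |s - t0| := by
      intro x hx
      have hxR : x ∈ Set.Icc (-R) R := hmem (e t0) (e s) het0R hesR x hx
      have := (convex_Icc (t0 - 1) (t0 + 1)).norm_image_sub_le_of_norm_deriv_le
        (f := fun t' => f x t')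
        (fun s' _ => (hasDerivAt_pt1 hg x s').differentiableAt)
        (fun s' hs' => by
          have hds : deriv (fun t' => f x t') s' = pt1 f x s' := rfl
          rw [hds, Real.norm_eq_abs]
          have := hM (x, s') ⟨hxR, hs'⟩
          simpa using this)
        ht0I hsI
      simpa [Real.norm_eq_abs] using this
    have hP3s : ‖P3 s‖ ≤ M * |s - t0| * |e s - e t0| := by
      have := intervalIntegral.norm_integral_le_of_norm_le_const hint
      simpa [Real.norm_eq_abs, abs_sub_comm (e s) (e t0)] using this
    have hmain : ‖P3 s‖ ≤ M * Ke * |s - t0| ^ 2 := by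
      calc ‖P3 s‖ ≤ M * |s - t0| * |e s - e t0| := hP3s
        _ ≤ M * |s - t0| * (Ke * |s - t0|) := by
            apply mul_le_mul_of_nonneg_left hs1
            positivity
        _ = M * Ke * |s - t0| ^ 2 := by ring
    have hfin : M * Ke * |s - t0| ^ 2 ≤ ε * |s - t0| := by
      have h1 : (M * Ke + 1) * |s - t0| ≤ ε := by
        rw [le_div_iff₀ (by positivity : (0:ℝ) < M * Ke + 1)] at hst2
        nlinarith [abs_nonneg (s - t0)]
      nlinarith [abs_nonneg (s - t0), sq_abs (s - t0)]
    have hgoal : ‖P3 s - P3 t0 - (s - t0) • (0:ℝ)‖ = ‖P3 s‖ := by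
      rw [hP3t0]; simp
    rw [hgoal, Real.norm_eq_abs]
    calc ‖P3 s‖ ≤ M * Ke * |s - t0| ^ 2 := hmain
      _ ≤ ε * |s - t0| := hfin
  have hsum := (hd1.add hd2).add hd3
  rw [hsplit]
  rw [add_zero] at hsum
  exact hsum

lemma hasDerivAt_sqrt_comp {u : ℝ → ℝ} {u' x : ℝ} (hu : HasDerivAt u u' x) (hpos : 0 < u x) :
    HasDerivAt (fun y => Real.sqrt (u y)) (u' / (2 * Real.sqrt (u x))) x := by
  have hs := (Real.hasDerivAt_sqrt (ne_of_gt hpos)).comp x hu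
  have hsne : Real.sqrt (u x) ≠ 0 := ne_of_gt (Real.sqrt_pos.2 hpos)
  have e : u' / (2 * Real.sqrt (u x)) = 1 / (2 * Real.sqrt (u x)) * u' := by ring
  rw [e]; exact hs

end Helpers

/-- total-flux identity (total_flux): for a 2D droplet on a textured
substrate with contact points pinned on the substrate, if the surfactant transport
equation holds on the wetting interval, then
`d/dt ∫_{a}^{b} c√(1+h_x²) dx = cosθ_b·[Dc_x + c(1+h_x w_x)b'] − cosθ_a·[Dc_x + c(1+h_x w_x)a']`. -/
theorem total_flux_identity
    (a b w : ℝ → ℝ) (h c : ℝ → ℝ → ℝ) (D : ℝ) (hD : 0 ≤ D)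
    (ha : ContDiff ℝ 1 a) (hb : ContDiff ℝ 1 b) (hab : ∀ t, a t < b t)
    (hw : ContDiff ℝ 1 w)
    (hh : ContDiff ℝ (⊤ : ℕ∞) (fun p : ℝ × ℝ => h p.1 p.2))
    (hc : ContDiff ℝ (⊤ : ℕ∞) (fun p : ℝ × ℝ => c p.1 p.2))
    (hpin : ∀ t, h (a t) t = w (a t) ∧ h (b t) t = w (b t))
    (heq : ∀ t, ∀ x ∈ Set.Icc (a t) (b t),
      pt1 c x t
          - (pt1 h x t / Qarc h x t) *
              px1 (fun x t => c x t * px1 h x t / Qarc h x t) x t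
        = (D / Qarc h x t) * px1 (fun x t => px1 c x t / Qarc h x t) x t) :
    ∀ t : ℝ,
      HasDerivAt (fun s => ∫ x in a s..b s, c x s * Real.sqrt (1 + px1 h x s ^ 2))
        ((1 / Qarc h (b t) t) *
            (D * px1 c (b t) t
              + c (b t) t * (1 + px1 h (b t) t * deriv w (b t)) * deriv b t)
          - (1 / Qarc h (a t) t) *
            (D * px1 c (a t) t
              + c (a t) t * (1 + px1 h (a t) t * deriv w (a t)) * deriv a t)) t := by
  intro t
  have hpxh : ContDiff ℝ (⊤ : ℕ∞) (fun p : ℝ × ℝ => px1 h p.1 p.2) := contDiff_px1 hh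
  have hQc : ContDiff ℝ (⊤ : ℕ∞) (fun p : ℝ × ℝ => Qarc h p.1 p.2) := by
    have h1 : ContDiff ℝ (⊤ : ℕ∞) (fun p : ℝ × ℝ => 1 + px1 h p.1 p.2 ^ 2) :=
      contDiff_const.add (hpxh.pow 2)
    rw [contDiff_iff_contDiffAt]
    intro p
    exact (Real.contDiffAt_sqrt (by positivity)).comp p h1.contDiffAt
  have hgC : ContDiff ℝ (⊤ : ℕ∞) (fun p : ℝ × ℝ => c p.1 p.2 * Qarc h p.1 p.2) := hc.mul hQc
  have hQpos : ∀ x s, 0 < Qarc h x s := fun x s => Real.sqrt_pos.2 (by positivity)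
  have hQsq : ∀ x s, Qarc h x s ^ 2 = 1 + px1 h x s ^ 2 := fun x s => Real.sq_sqrt (by positivity)
  -- Leibniz rule with moving endpoints
  have Hb := leibniz_one (f := fun x s => c x s * Qarc h x s) hgC hb (a t) t
  have Ha := leibniz_one (f := fun x s => c x s * Qarc h x s) hgC ha (a t) t
  have Hsub := Hb.sub Ha
  have hgcont : ∀ s, Continuous fun x => c x s * Qarc h x s := fun s =>
    hgC.continuous.comp (continuous_id.prodMk continuous_const)
  have hfun : (fun s => ∫ x in a s..b s, c x s * Real.sqrt (1 + px1 h x s ^ 2))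
      = fun s => (∫ x in a t..b s, c x s * Qarc h x s)
        - (∫ x in a t..a s, c x s * Qarc h x s) := by
    funext s
    rw [integral_interval_sub_left ((hgcont s).intervalIntegrable _ _)
      ((hgcont s).intervalIntegrable _ _)]
    rfl
  -- FTC for the interior term
  set F : ℝ → ℝ := fun x => pt1 h x t * (c x t * px1 h x t / Qarc h x t)
    + D * (px1 c x t / Qarc h x t) with hF_def
  have key : ∀ x ∈ Set.uIcc (a t) (b t),
      HasDerivAt F (pt1 (fun x s => c x s * Qarc h x s) x t) x := by
    intro x hx
    have hx' : x ∈ Set.Icc (a t) (b t) := by rwa [Set.uIcc_of_le (hab t).le] at hx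
    have qne : Qarc h x t ≠ 0 := ne_of_gt (hQpos x t)
    -- derivatives in x at fixed t
    have dC : HasDerivAt (fun x' => c x' t) (px1 c x t) x := hasDerivAt_px1 hc x t
    have dHx : HasDerivAt (fun x' => px1 h x' t) (px1 (fun x s => px1 h x s) x t) x :=
      hasDerivAt_px1 (contDiff_px1 hh) x t
    have dHt : HasDerivAt (fun x' => pt1 h x' t) (px1 (fun x s => pt1 h x s) x t) x :=
      hasDerivAt_px1 (contDiff_pt1 hh) x t
    have dCx : HasDerivAt (fun x' => px1 c x' t) (px1 (fun x s => px1 c x s) x t) x :=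
      hasDerivAt_px1 (contDiff_px1 hc) x t
    have dQin : HasDerivAt (fun x' => 1 + px1 h x' t ^ 2)
        (2 * px1 h x t * px1 (fun x s => px1 h x s) x t) x := by
      have := (dHx.pow 2).const_add 1
      simpa [mul_comm, mul_assoc, mul_left_comm] using this
    have dQ : HasDerivAt (fun x' => Qarc h x' t)
        (2 * px1 h x t * px1 (fun x s => px1 h x s) x t / (2 * Qarc h x t)) x :=
      hasDerivAt_sqrt_comp dQin (by positivity)
    have dA : HasDerivAt (fun x' => c x' t * px1 h x' t / Qarc h x' t)
        (px1 (fun x s => c x s * px1 h x s / Qarc h x s) x t) x :=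
      (((dC.mul dHx).div dQ qne)).differentiableAt.hasDerivAt
    have dB : HasDerivAt (fun x' => px1 c x' t / Qarc h x' t)
        (px1 (fun x s => px1 c x s / Qarc h x s) x t) x :=
      ((dCx.div dQ qne)).differentiableAt.hasDerivAt
    have dF : HasDerivAt F
        (px1 (fun x s => pt1 h x s) x t * (c x t * px1 h x t / Qarc h x t)
          + pt1 h x t * px1 (fun x s => c x s * px1 h x s / Qarc h x s) x t
          + D * px1 (fun x s => px1 c x s / Qarc h x s) x t) x :=
      (dHt.mul dA).add (dB.const_mul D)
    -- derivative of the integrand in t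
    have dCt : HasDerivAt (fun t' => c x t') (pt1 c x t) t := hasDerivAt_pt1 hc x t
    have dHxt : HasDerivAt (fun t' => px1 h x t') (pt1 (fun x s => px1 h x s) x t) t :=
      hasDerivAt_pt1 (contDiff_px1 hh) x t
    have dQint : HasDerivAt (fun t' => 1 + px1 h x t' ^ 2)
        (2 * px1 h x t * pt1 (fun x s => px1 h x s) x t) t := by
      have := (dHxt.pow 2).const_add 1
      simpa [mul_comm, mul_assoc, mul_left_comm] using this
    have dQt : HasDerivAt (fun t' => Qarc h x t')
        (2 * px1 h x t * pt1 (fun x s => px1 h x s) x t / (2 * Qarc h x t)) t :=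
      hasDerivAt_sqrt_comp dQint (by positivity)
    have dgt : HasDerivAt (fun t' => c x t' * Qarc h x t')
        (pt1 c x t * Qarc h x t
          + c x t * (2 * px1 h x t * pt1 (fun x s => px1 h x s) x t / (2 * Qarc h x t))) t :=
      dCt.mul dQt
    have hgt : pt1 (fun x s => c x s * Qarc h x s) x t
        = pt1 c x t * Qarc h x t
          + c x t * (2 * px1 h x t * pt1 (fun x s => px1 h x s) x t / (2 * Qarc h x t)) :=
      dgt.deriv
    have hsym : px1 (fun x s => pt1 h x s) x t = pt1 (fun x s => px1 h x s) x t :=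
      mixed_symm hh x t
    have hpde := heq t x hx'
    have hval : px1 (fun x s => pt1 h x s) x t * (c x t * px1 h x t / Qarc h x t)
          + pt1 h x t * px1 (fun x s => c x s * px1 h x s / Qarc h x s) x t
          + D * px1 (fun x s => px1 c x s / Qarc h x s) x t
        = pt1 (fun x s => c x s * Qarc h x s) x t := by
      rw [hgt, hsym]
      have hct : pt1 c x t
          = (pt1 h x t / Qarc h x t) * px1 (fun x s => c x s * px1 h x s / Qarc h x s) x t
            + (D / Qarc h x t) * px1 (fun x s => px1 c x s / Qarc h x s) x t := by
        linarith [hpde]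
      rw [hct]
      field_simp
      ring
    exact hval ▸ dF
  have hptgc : Continuous fun x => pt1 (fun x s => c x s * Qarc h x s) x t :=
    (contDiff_pt1 (f := fun x s => c x s * Qarc h x s) hgC).continuous.comp
      (continuous_id.prodMk continuous_const)
  have hFTC : ∫ x in a t..b t, pt1 (fun x s => c x s * Qarc h x s) x t = F (b t) - F (a t) :=
    integral_eq_sub_of_hasDerivAt key (hptgc.intervalIntegrable _ _)
  -- pinned-endpoint relations
  have hbD : HasDerivAt b (deriv b t) t := ((hb.differentiable one_ne_zero) t).hasDerivAt
  have haD : HasDerivAt a (deriv a t) t := ((ha.differentiable one_ne_zero) t).hasDerivAt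
  have hlin : ∀ (u' x s : ℝ), fderiv ℝ (fun p : ℝ × ℝ => h p.1 p.2) (x, s) (u', 1)
      = u' * px1 h x s + pt1 h x s := by
    intro u' x s
    have hsplit2 : (u', (1:ℝ)) = u' • ((1:ℝ), (0:ℝ)) + ((0:ℝ), (1:ℝ)) := by
      simp [Prod.ext_iff]
    rw [hsplit2, map_add, map_smul, ← px1_eq hh, ← pt1_eq hh]
    simp [smul_eq_mul]
  have hpinD : ∀ (e : ℝ → ℝ), HasDerivAt e (deriv e t) t →
      ((fun s => h (e s) s) = fun s => w (e s)) →
      deriv e t * px1 h (e t) t + pt1 h (e t) t = deriv w (e t) * deriv e t := by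
    intro e heD hfe
    have hwD : HasDerivAt w (deriv w (e t)) (e t) :=
      ((hw.differentiable one_ne_zero) (e t)).hasDerivAt
    have hcomp1 : HasDerivAt (fun s => h (e s) s)
        (fderiv ℝ (fun p : ℝ × ℝ => h p.1 p.2) (e t, t) (deriv e t, 1)) t := by
      have hH : HasFDerivAt (fun p : ℝ × ℝ => h p.1 p.2)
          (fderiv ℝ (fun p : ℝ × ℝ => h p.1 p.2) (e t, t)) (e t, t) :=
        ((hh.differentiable (by simp)) _).hasFDerivAt
      have hcomp0 := HasFDerivAt.comp_hasDerivAt (f := fun s => (e s, id s)) t hH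
        (heD.prodMk (hasDerivAt_id t))
      exact hcomp0
    have hcomp2 : HasDerivAt (fun s => w (e s)) (deriv w (e t) * deriv e t) t :=
      hwD.comp t heD
    rw [hfe] at hcomp1
    have := hcomp1.unique hcomp2
    rw [← hlin (deriv e t) (e t) t, this]
  have hpb := hpinD b hbD (funext fun s => (hpin s).2)
  have hpa := hpinD a haD (funext fun s => (hpin s).1)
  -- assemble
  rw [hfun]
  have hIat : (∫ x in a t..a t, pt1 (fun x s => c x s * Qarc h x s) x t) = 0 :=
    integral_same
  rw [hIat] at Ha
  have Hsub2 := Hb.sub Ha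
  have hvfin : (1 / Qarc h (b t) t) *
        (D * px1 c (b t) t
          + c (b t) t * (1 + px1 h (b t) t * deriv w (b t)) * deriv b t)
      - (1 / Qarc h (a t) t) *
        (D * px1 c (a t) t
          + c (a t) t * (1 + px1 h (a t) t * deriv w (a t)) * deriv a t)
      = (c (b t) t * Qarc h (b t) t * deriv b t
          + ∫ x in a t..b t, pt1 (fun x s => c x s * Qarc h x s) x t)
        - (c (a t) t * Qarc h (a t) t * deriv a t + 0) := by
    rw [hFTC]
    have qbne : Qarc h (b t) t ≠ 0 := ne_of_gt (hQpos (b t) t)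
    have qane : Qarc h (a t) t ≠ 0 := ne_of_gt (hQpos (a t) t)
    have hb2 := hQsq (b t) t
    have ha2 := hQsq (a t) t
    have hptb : pt1 h (b t) t = deriv w (b t) * deriv b t - deriv b t * px1 h (b t) t := by
      linarith [hpb]
    have hpta : pt1 h (a t) t = deriv w (a t) * deriv a t - deriv a t * px1 h (a t) t := by
      linarith [hpa]
    have ep_alg : ∀ q hx wp cc cx ep : ℝ, q ≠ 0 → q ^ 2 = 1 + hx ^ 2 →
        (1/q) * (D * cx + cc * (1 + hx * wp) * ep)
          = cc * q * ep + ((wp * ep - ep * hx) * (cc * hx / q) + D * (cx / q)) := by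
      intro q hx wp cc cx ep hq h2
      field_simp
      linear_combination (-cc * ep) * h2
    have hFb : F (b t) = pt1 h (b t) t * (c (b t) t * px1 h (b t) t / Qarc h (b t) t)
        + D * (px1 c (b t) t / Qarc h (b t) t) := rfl
    have hFa : F (a t) = pt1 h (a t) t * (c (a t) t * px1 h (a t) t / Qarc h (a t) t)
        + D * (px1 c (a t) t / Qarc h (a t) t) := rfl
    have eb := ep_alg (Qarc h (b t) t) (px1 h (b t) t) (deriv w (b t)) (c (b t) t)
      (px1 c (b t) t) (deriv b t) qbne hb2
    have ea := ep_alg (Qarc h (a t) t) (px1 h (a t) t) (deriv w (a t)) (c (a t) t)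
      (px1 c (a t) t) (deriv a t) qane ha2
    rw [hFb, hFa, hptb, hpta]
    linarith [eb, ea]
  rw [hvfin]
  exact Hsub2
end

section
/- Let a, b : ℝ → ℝ be C¹ with a(t) < b(t) for all t, let w : ℝ → ℝ be C¹, and let h, c : ℝ × ℝ → ℝ be sufficiently smooth with h(a(t), t) = w(a(t)) and h(b(t), t) = w(b(t)) for all t. Set Q := √(1 + h_x²), v_n := h_t/Q, and let D ≥ 0. Suppose that for every t and every x ∈ [a(t), b(t)] the surfactant equation c_t − v_n·∂_x(c·h_x/Q) = (D/Q)·∂_x(c_x/Q) holds, and that the Robin boundary conditions D·c_x + c·(1 + h_x·w_x)·b'(t) = 0 at x = b(t) and D·c_x + c·(1 + h_x·w_x)·a'(t) = 0 at x = a(t) hold for all t. Then the total mass of surfactant ∫_{a(t)}^{b(t)} c·√(1 + h_x²) dx is constant in t. -/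
open intervalIntegral

private def unc (F : ℝ → ℝ → ℝ) : ℝ × ℝ → ℝ := fun p => F p.1 p.2

private lemma hasDerivAt_slice_x {F : ℝ → ℝ → ℝ} (hF : Differentiable ℝ (unc F)) (x t : ℝ) :
    HasDerivAt (fun x' => F x' t) (px1 F x t) x := by
  have : DifferentiableAt ℝ (fun x' => F x' t) x := by
    have := (hF (x, t)).comp x ((differentiableAt_id (𝕜 := ℝ) (x := x)).prodMk (differentiableAt_const t))
    exact this
  exact this.hasDerivAt

private lemma hasDerivAt_slice_t {F : ℝ → ℝ → ℝ} (hF : Differentiable ℝ (unc F)) (x t : ℝ) :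
    HasDerivAt (fun t' => F x t') (pt1 F x t) t := by
  have : DifferentiableAt ℝ (fun t' => F x t') t :=
    (hF (x, t)).comp t ((differentiableAt_const x).prodMk differentiableAt_id)
  exact this.hasDerivAt

private lemma px1_eq_fderiv {F : ℝ → ℝ → ℝ} (hF : Differentiable ℝ (unc F)) (x t : ℝ) :
    px1 F x t = fderiv ℝ (unc F) (x, t) (1, 0) := by
  have h1 : HasDerivAt (fun x' => (x', t)) ((1 : ℝ), (0 : ℝ)) x :=
    (hasDerivAt_id x).prodMk (hasDerivAt_const x t)
  have h2 : HasDerivAt (fun x' => F x' t) (fderiv ℝ (unc F) (x, t) (1, 0)) x := by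
    have := (hF (x, t)).hasFDerivAt.comp_hasDerivAt x h1
    exact this
  exact h2.deriv.symm ▸ rfl

private lemma pt1_eq_fderiv {F : ℝ → ℝ → ℝ} (hF : Differentiable ℝ (unc F)) (x t : ℝ) :
    pt1 F x t = fderiv ℝ (unc F) (x, t) (0, 1) := by
  have h1 : HasDerivAt (fun t' => (x, t')) ((0 : ℝ), (1 : ℝ)) t :=
    (hasDerivAt_const t x).prodMk (hasDerivAt_id t)
  have h2 : HasDerivAt (fun t' => F x t') (fderiv ℝ (unc F) (x, t) (0, 1)) t :=
    (hF (x, t)).hasFDerivAt.comp_hasDerivAt t h1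
  exact h2.deriv.symm ▸ rfl

private lemma contDiff_unc_px1 {F : ℝ → ℝ → ℝ} (hF : ContDiff ℝ (⊤ : ℕ∞) (unc F)) :
    ContDiff ℝ (⊤ : ℕ∞) (unc (px1 F)) := by
  have hd : Differentiable ℝ (unc F) := hF.differentiable (by simp)
  have : unc (px1 F) = fun p => fderiv ℝ (unc F) p (1, 0) := by
    funext p
    exact px1_eq_fderiv hd p.1 p.2
  rw [this]
  exact (hF.fderiv_right (by simp)).clm_apply contDiff_const

private lemma contDiff_unc_pt1 {F : ℝ → ℝ → ℝ} (hF : ContDiff ℝ (⊤ : ℕ∞) (unc F)) :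
    ContDiff ℝ (⊤ : ℕ∞) (unc (pt1 F)) := by
  have hd : Differentiable ℝ (unc F) := hF.differentiable (by simp)
  have : unc (pt1 F) = fun p => fderiv ℝ (unc F) p (0, 1) := by
    funext p
    exact pt1_eq_fderiv hd p.1 p.2
  rw [this]
  exact (hF.fderiv_right (by simp)).clm_apply contDiff_const

private lemma clairaut {F : ℝ → ℝ → ℝ} (hF : ContDiff ℝ (⊤ : ℕ∞) (unc F)) (x t : ℝ) :
    px1 (pt1 F) x t = pt1 (px1 F) x t := by
  have hd : Differentiable ℝ (unc F) := hF.differentiable (by simp)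
  have hd1 : ContDiff ℝ (⊤ : ℕ∞) (fderiv ℝ (unc F)) := hF.fderiv_right (by simp)
  have hd1' : Differentiable ℝ (fderiv ℝ (unc F)) := hd1.differentiable (by simp)
  have e1 : unc (pt1 F) = fun p => fderiv ℝ (unc F) p (0, 1) := by
    funext p; exact pt1_eq_fderiv hd p.1 p.2
  have e2 : unc (px1 F) = fun p => fderiv ℝ (unc F) p (1, 0) := by
    funext p; exact px1_eq_fderiv hd p.1 p.2
  have hsym : ∀ v w : ℝ × ℝ,
      fderiv ℝ (fderiv ℝ (unc F)) (x, t) v w = fderiv ℝ (fderiv ℝ (unc F)) (x, t) w v := by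
    intro v w
    exact second_derivative_symmetric (fun y => (hd y).hasFDerivAt)
      ((hd1' (x, t)).hasFDerivAt) v w
  have k1 : ∀ v : ℝ × ℝ, ∀ p : ℝ × ℝ,
      fderiv ℝ (fun q => fderiv ℝ (unc F) q v) p
        = (fderiv ℝ (fderiv ℝ (unc F)) p).flip v := by
    intro v p
    rw [fderiv_clm_apply (hd1' p) (differentiableAt_const v)]
    simp
  have l1 : px1 (pt1 F) x t = fderiv ℝ (fderiv ℝ (unc F)) (x, t) (1, 0) (0, 1) := by
    have := px1_eq_fderiv (F := pt1 F)
      ((contDiff_unc_pt1 hF).differentiable (by simp)) x t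
    rw [this]
    have : unc (pt1 F) = fun p => fderiv ℝ (unc F) p (0, 1) := e1
    rw [this, k1]
    rfl
  have l2 : pt1 (px1 F) x t = fderiv ℝ (fderiv ℝ (unc F)) (x, t) (0, 1) (1, 0) := by
    have := pt1_eq_fderiv (F := px1 F)
      ((contDiff_unc_px1 hF).differentiable (by simp)) x t
    rw [this, e2, k1]
    rfl
  rw [l1, l2, hsym]

private lemma Qarc_pos (h : ℝ → ℝ → ℝ) (x t : ℝ) : 0 < Qarc h x t :=
  Real.sqrt_pos.2 (by positivity)

private lemma Qarc_sq (h : ℝ → ℝ → ℝ) (x t : ℝ) : Qarc h x t ^ 2 = 1 + px1 h x t ^ 2 :=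
  Real.sq_sqrt (by positivity)

private lemma contDiff_unc_Qarc {h : ℝ → ℝ → ℝ} (hh : ContDiff ℝ (⊤ : ℕ∞) (unc h)) :
    ContDiff ℝ (⊤ : ℕ∞) (unc (Qarc h)) := by
  have h1 : ContDiff ℝ (⊤ : ℕ∞) (fun p : ℝ × ℝ => 1 + unc (px1 h) p ^ 2) :=
    contDiff_const.add ((contDiff_unc_px1 hh).pow 2)
  rw [contDiff_iff_contDiffAt]
  intro p
  exact ContDiffAt.sqrt h1.contDiffAt (by positivity)

section main
variable {h c : ℝ → ℝ → ℝ} {D : ℝ}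

/-- mass density -/
private noncomputable def fm (c h : ℝ → ℝ → ℝ) (x t : ℝ) : ℝ := c x t * Qarc h x t

/-- time derivative of the mass density -/
private noncomputable def ft (c h : ℝ → ℝ → ℝ) (x t : ℝ) : ℝ :=
  pt1 c x t * Qarc h x t
    + c x t * (px1 h x t * pt1 (px1 h) x t / Qarc h x t)

/-- flux -/
private noncomputable def gf (c h : ℝ → ℝ → ℝ) (D : ℝ) (x t : ℝ) : ℝ :=
  pt1 h x t * (c x t * px1 h x t / Qarc h x t) + D * (px1 c x t / Qarc h x t)

private lemma contDiff_unc_fm (hh : ContDiff ℝ (⊤ : ℕ∞) (unc h)) (hc : ContDiff ℝ (⊤ : ℕ∞) (unc c)) :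
    ContDiff ℝ (⊤ : ℕ∞) (unc (fm c h)) :=
  hc.mul (contDiff_unc_Qarc hh)

private lemma continuous_unc_ft (hh : ContDiff ℝ (⊤ : ℕ∞) (unc h)) (hc : ContDiff ℝ (⊤ : ℕ∞) (unc c)) :
    Continuous (unc (ft c h)) := by
  have hQ : ContDiff ℝ (⊤ : ℕ∞) (unc (Qarc h)) := contDiff_unc_Qarc hh
  have : ContDiff ℝ (⊤ : ℕ∞) (unc (ft c h)) :=
    ((contDiff_unc_pt1 hc).mul hQ).add
      (hc.mul (((contDiff_unc_px1 hh).mul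
        (contDiff_unc_pt1 (contDiff_unc_px1 hh))).div hQ
        (fun p => (Qarc_pos h p.1 p.2).ne')))
  exact this.continuous

private lemma contDiff_unc_gf (hh : ContDiff ℝ (⊤ : ℕ∞) (unc h)) (hc : ContDiff ℝ (⊤ : ℕ∞) (unc c)) :
    ContDiff ℝ (⊤ : ℕ∞) (unc (gf c h D)) := by
  have hQ : ContDiff ℝ (⊤ : ℕ∞) (unc (Qarc h)) := contDiff_unc_Qarc hh
  have hne : ∀ p : ℝ × ℝ, unc (Qarc h) p ≠ 0 := fun p => (Qarc_pos h p.1 p.2).ne'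
  exact ((contDiff_unc_pt1 hh).mul ((hc.mul (contDiff_unc_px1 hh)).div hQ hne)).add
    (contDiff_const.mul ((contDiff_unc_px1 hc).div hQ hne))

private lemma hasDerivAt_fm_t (hh : ContDiff ℝ (⊤ : ℕ∞) (unc h)) (hc : ContDiff ℝ (⊤ : ℕ∞) (unc c))
    (x t : ℝ) : HasDerivAt (fun t' => fm c h x t') (ft c h x t) t := by
  have h1 : HasDerivAt (fun t' => c x t') (pt1 c x t) t :=
    hasDerivAt_slice_t (hc.differentiable (by simp)) x t
  have h2 : HasDerivAt (fun t' => px1 h x t') (pt1 (px1 h) x t) t :=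
    hasDerivAt_slice_t ((contDiff_unc_px1 hh).differentiable (by simp)) x t
  have h3 : HasDerivAt (fun t' => 1 + px1 h x t' ^ 2)
      ((2 : ℕ) * px1 h x t ^ 1 * pt1 (px1 h) x t) t := (h2.pow 2).const_add 1
  have h4 := h3.sqrt (by positivity :  1 + px1 h x t ^ 2 ≠ 0)
  have h5 := h1.mul h4
  have hQpos := Qarc_pos h x t
  have : pt1 c x t * Real.sqrt (1 + px1 h x t ^ 2)
      + c x t * ((2 : ℕ) * px1 h x t ^ 1 * pt1 (px1 h) x t
          / (2 * Real.sqrt (1 + px1 h x t ^ 2))) = ft c h x t := by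
    unfold ft Qarc
    have hs : Real.sqrt (1 + px1 h x t ^ 2) ≠ 0 := by
      unfold Qarc at hQpos; positivity
    field_simp
    ring
  rw [← this]
  exact h5

private lemma key_hasDerivAt_gf (hh : ContDiff ℝ (⊤ : ℕ∞) (unc h)) (hc : ContDiff ℝ (⊤ : ℕ∞) (unc c))
    (x t : ℝ)
    (pde : pt1 c x t
          - (pt1 h x t / Qarc h x t) *
              px1 (fun x t => c x t * px1 h x t / Qarc h x t) x t
        = (D / Qarc h x t) * px1 (fun x t => px1 c x t / Qarc h x t) x t) :
    HasDerivAt (fun x' => gf c h D x' t) (ft c h x t) x := by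
  have hQ : ContDiff ℝ (⊤ : ℕ∞) (unc (Qarc h)) := contDiff_unc_Qarc hh
  have hne : ∀ p : ℝ × ℝ, unc (Qarc h) p ≠ 0 := fun p => (Qarc_pos h p.1 p.2).ne'
  have hA : ContDiff ℝ (⊤ : ℕ∞) (unc (fun x t => c x t * px1 h x t / Qarc h x t)) :=
    (hc.mul (contDiff_unc_px1 hh)).div hQ hne
  have hB : ContDiff ℝ (⊤ : ℕ∞) (unc (fun x t => px1 c x t / Qarc h x t)) :=
    (contDiff_unc_px1 hc).div hQ hne
  have hq : HasDerivAt (fun x' => pt1 h x' t) (px1 (pt1 h) x t) x :=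
    hasDerivAt_slice_x ((contDiff_unc_pt1 hh).differentiable (by simp)) x t
  have hA' : HasDerivAt (fun x' => c x' t * px1 h x' t / Qarc h x' t)
      (px1 (fun x t => c x t * px1 h x t / Qarc h x t) x t) x :=
    hasDerivAt_slice_x (hA.differentiable (by simp)) x t
  have hB' : HasDerivAt (fun x' => px1 c x' t / Qarc h x' t)
      (px1 (fun x t => px1 c x t / Qarc h x t) x t) x :=
    hasDerivAt_slice_x (hB.differentiable (by simp)) x t
  have hg := (hq.mul hA').add (hB'.const_mul D)
  have hcl := clairaut hh x t
  have hQpos := Qarc_pos h x t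
  have hQne := hQpos.ne'
  have heqv : px1 (pt1 h) x t * (c x t * px1 h x t / Qarc h x t)
        + pt1 h x t * px1 (fun x t => c x t * px1 h x t / Qarc h x t) x t
        + D * px1 (fun x t => px1 c x t / Qarc h x t) x t
      = ft c h x t := by
    unfold ft
    rw [hcl]
    have pde' : pt1 c x t * Qarc h x t
        - pt1 h x t * px1 (fun x t => c x t * px1 h x t / Qarc h x t) x t
        = D * px1 (fun x t => px1 c x t / Qarc h x t) x t := by
      field_simp at pde
      linarith
    field_simp
    linear_combination (-(Qarc h x t)) * pde'
  rw [← heqv]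
  exact hg

end main

private lemma hasDerivAt_integral_moving {f : ℝ → ℝ → ℝ}
    (hf : ContDiff ℝ (⊤ : ℕ∞) (unc f)) {b : ℝ → ℝ} (hb : ContDiff ℝ 1 b) (t₀ : ℝ) :
    HasDerivAt (fun t => ∫ x in (b t₀)..(b t), f x t)
      (f (b t₀) t₀ * deriv b t₀) t₀ := by
  set v := b t₀ with hv
  have contf : Continuous (unc f) := hf.continuous
  have contst : ∀ t, Continuous (fun x => f x t) := fun t =>
    contf.comp (continuous_id.prodMk continuous_const)
  have intany : ∀ (p q t : ℝ), IntervalIntegrable (fun x => f x t) MeasureTheory.volume p q :=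
    fun p q t => (contst t).intervalIntegrable p q
  have hsplit : (fun t => ∫ x in v..(b t), f x t)
      = fun t => (∫ x in v..(b t), f x t₀)
          + ((∫ x in v..(b t), f x t) - ∫ x in v..(b t), f x t₀) := by
    funext t; ring
  rw [hsplit]
  have hbd : HasDerivAt b (deriv b t₀) t₀ := (hb.differentiable one_ne_zero t₀).hasDerivAt
  have part1 : HasDerivAt (fun t => ∫ x in v..(b t), f x t₀)
      (f (b t₀) t₀ * deriv b t₀) t₀ := by
    have hG : HasDerivAt (fun y => ∫ x in v..y, f x t₀) (f (b t₀) t₀) (b t₀) :=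
      intervalIntegral.integral_hasDerivAt_right (intany v (b t₀) t₀)
        ((contst t₀).stronglyMeasurableAtFilter _ _) ((contst t₀).continuousAt)
    have := HasDerivAt.comp t₀ hG hbd
    exact this
  have part2 : HasDerivAt
      (fun t => (∫ x in v..(b t), f x t) - ∫ x in v..(b t), f x t₀) 0 t₀ := by
    obtain ⟨K, s, hs, hK⟩ :=
      ((hf.contDiffAt (x := (v, t₀))).of_le (by simp)).exists_lipschitzOnWith
    obtain ⟨r, hr, hball⟩ := Metric.mem_nhds_iff.1 hs
    rw [hasDerivAt_iff_isLittleO]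
    have hE0 : (∫ x in v..(b t₀), f x t₀) - ∫ x in v..(b t₀), f x t₀ = 0 := by ring
    simp only [smul_zero, sub_zero, hE0]
    rw [Asymptotics.isLittleO_iff]
    intro ε hε
    have hδ : (0 : ℝ) < min (r / 2) (ε / (K + 1)) := by
      apply lt_min (by linarith)
      positivity
    have hbt : ∀ᶠ t in nhds t₀, dist (b t) v < min (r / 2) (ε / (K + 1)) :=
      Metric.tendsto_nhds.mp (hb.continuous.tendsto t₀) _ hδ
    have htt : ∀ᶠ t in nhds t₀, dist t t₀ < r / 2 :=
      Metric.tendsto_nhds.mp Filter.tendsto_id _ (by linarith)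
    filter_upwards [hbt, htt] with t h1 h2
    rw [Real.dist_eq] at h1 h2
    have hEt : (∫ x in v..(b t), f x t) - ∫ x in v..(b t), f x t₀
        = ∫ x in v..(b t), (f x t - f x t₀) :=
      (intervalIntegral.integral_sub (intany v (b t) t) (intany v (b t) t₀)).symm
    rw [hEt]
    have hbound : ∀ x ∈ Set.uIoc v (b t), ‖f x t - f x t₀‖ ≤ (K : ℝ) * |t - t₀| := by
      intro x hx
      have hxv : |x - v| ≤ |b t - v| := by
        rcases Set.mem_uIoc.1 hx with ⟨hx1, hx2⟩ | ⟨hx1, hx2⟩ <;>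
          · rw [abs_sub_le_iff]
            constructor <;>
              linarith [le_abs_self (b t - v), neg_abs_le (b t - v), abs_nonneg (b t - v)]
      have hm1 : ((x, t) : ℝ × ℝ) ∈ s := by
        apply hball
        rw [Metric.mem_ball, Prod.dist_eq]
        apply max_lt
        · rw [Real.dist_eq]
          calc |x - v| ≤ |b t - v| := hxv
            _ < r := by
              have := lt_of_lt_of_le h1 (min_le_left _ _); linarith
        · rw [Real.dist_eq]; linarith
      have hm2 : ((x, t₀) : ℝ × ℝ) ∈ s := by
        apply hball
        rw [Metric.mem_ball, Prod.dist_eq]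
        apply max_lt
        · rw [Real.dist_eq]
          calc |x - v| ≤ |b t - v| := hxv
            _ < r := by
              have := lt_of_lt_of_le h1 (min_le_left _ _); linarith
        · simp [hr]
      have := hK.dist_le_mul (x, t) hm1 (x, t₀) hm2
      rw [Prod.dist_eq] at this
      simp only [dist_self, Real.dist_eq] at this
      have hmax : max (0 : ℝ) |t - t₀| = |t - t₀| := max_eq_right (abs_nonneg _)
      rw [hmax] at this
      calc ‖f x t - f x t₀‖ = dist (unc f (x, t)) (unc f (x, t₀)) := by
            rw [dist_eq_norm]; rfl
        _ ≤ (K : ℝ) * |t - t₀| := this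
    have hb1 : ‖∫ x in v..(b t), (f x t - f x t₀)‖ ≤ ((K : ℝ) * |t - t₀|) * |b t - v| :=
      intervalIntegral.norm_integral_le_of_norm_le_const hbound
    have h1' : |b t - v| ≤ ε / ((K : ℝ) + 1) := le_of_lt (lt_of_lt_of_le h1 (min_le_right _ _))
    have hKnn : (0 : ℝ) ≤ (K : ℝ) := K.coe_nonneg
    calc ‖∫ x in v..(b t), (f x t - f x t₀)‖
        ≤ ((K : ℝ) * |t - t₀|) * |b t - v| := hb1
      _ ≤ ((K : ℝ) * |t - t₀|) * (ε / ((K : ℝ) + 1)) := by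
          apply mul_le_mul_of_nonneg_left h1' (by positivity)
      _ ≤ ε * |t - t₀| := by
          have hK1 : (0 : ℝ) < (K : ℝ) + 1 := by linarith
          have h0 : (K : ℝ) / ((K : ℝ) + 1) ≤ 1 := by rw [div_le_one hK1]; linarith
          calc (K : ℝ) * |t - t₀| * (ε / ((K : ℝ) + 1))
              = ((K : ℝ) / ((K : ℝ) + 1)) * (ε * |t - t₀|) := by ring
            _ ≤ 1 * (ε * |t - t₀|) := mul_le_mul_of_nonneg_right h0 (by positivity)
            _ = ε * |t - t₀| := one_mul _
      _ = ε * ‖t - t₀‖ := rfl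
  have := part1.add part2
  rw [add_zero] at this
  exact this

private lemma hasDerivAt_integral_param {f f' : ℝ → ℝ → ℝ}
    (hfc : Continuous (unc f)) (hf'c : Continuous (unc f'))
    (hd : ∀ x s, HasDerivAt (fun s' => f x s') (f' x s) s)
    (u v t₀ : ℝ) :
    HasDerivAt (fun t => ∫ x in u..v, f x t) (∫ x in u..v, f' x t₀) t₀ := by
  obtain ⟨C, hC⟩ :=
    (isCompact_uIcc (a := u) (b := v)).prod (isCompact_closedBall t₀ 1)
      |>.exists_bound_of_continuousOn hf'c.continuousOn
  have slice : ∀ t, Continuous (fun x => f x t) := fun t =>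
    hfc.comp (continuous_id.prodMk continuous_const)
  have slice' : ∀ t, Continuous (fun x => f' x t) := fun t =>
    hf'c.comp (continuous_id.prodMk continuous_const)
  refine (intervalIntegral.hasDerivAt_integral_of_dominated_loc_of_deriv_le
      (F := fun s x => f x s) (F' := fun s x => f' x s) (bound := fun _ => C)
      (a := u) (b := v) (x₀ := t₀) (s := Metric.ball t₀ 1) (Metric.ball_mem_nhds t₀ one_pos)
      (Filter.Eventually.of_forall fun s => (slice s).aestronglyMeasurable)
      ((slice t₀).intervalIntegrable u v)
      (slice' t₀).aestronglyMeasurable ?_ (intervalIntegrable_const) ?_).2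
  · apply Filter.Eventually.of_forall
    intro x hx s hs
    exact hC (x, s) ⟨Set.uIoc_subset_uIcc hx, Metric.ball_subset_closedBall hs⟩
  · apply Filter.Eventually.of_forall
    intro x _ s _
    exact hd x s

private lemma boundary_zero {h c : ℝ → ℝ → ℝ} {D : ℝ} {w e : ℝ → ℝ}
    (hh : ContDiff ℝ (⊤ : ℕ∞) (unc h)) (hw : ContDiff ℝ 1 w) (he : ContDiff ℝ 1 e)
    (hpin : ∀ t, h (e t) t = w (e t)) (t : ℝ)
    (hbc : D * px1 c (e t) t
        + c (e t) t * (1 + px1 h (e t) t * deriv w (e t)) * deriv e t = 0) :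
    gf c h D (e t) t + fm c h (e t) t * deriv e t = 0 := by
  have hde : HasDerivAt e (deriv e t) t := (he.differentiable one_ne_zero t).hasDerivAt
  have γ : HasDerivAt (fun t' => ((e t' : ℝ), (t' : ℝ))) (deriv e t, (1 : ℝ)) t :=
    hde.prodMk (hasDerivAt_id t)
  have hdh : Differentiable ℝ (unc h) := hh.differentiable (by simp)
  have hφ' := (hdh (e t, t)).hasFDerivAt.comp_hasDerivAt_of_eq t γ rfl
  have hφ : HasDerivAt (fun t' => h (e t') t')
      (fderiv ℝ (unc h) (e t, t) (deriv e t, 1)) t := hφ'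
  have hψ : HasDerivAt (fun t' => w (e t')) (deriv w (e t) * deriv e t) t := by
    have := HasDerivAt.comp t ((hw.differentiable one_ne_zero (e t)).hasDerivAt) hde
    exact this
  have hfun : (fun t' => h (e t') t') = fun t' => w (e t') := funext fun t' => hpin t'
  have hder : fderiv ℝ (unc h) (e t, t) (deriv e t, 1) = deriv w (e t) * deriv e t := by
    rw [hfun] at hφ
    exact hψ.unique hφ ▸ rfl
  have hdecomp : ((deriv e t : ℝ), (1 : ℝ))
      = deriv e t • ((1 : ℝ), (0 : ℝ)) + ((0 : ℝ), (1 : ℝ)) := by simp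
  have hrel : deriv e t * px1 h (e t) t + pt1 h (e t) t = deriv w (e t) * deriv e t := by
    rw [← hder, hdecomp, map_add, map_smul, smul_eq_mul,
      ← px1_eq_fderiv hdh (e t) t, ← pt1_eq_fderiv hdh (e t) t]
  have hQpos := Qarc_pos h (e t) t
  have hQne := hQpos.ne'
  have hsq := Qarc_sq h (e t) t
  unfold gf fm
  field_simp
  linear_combination hbc + c (e t) t * px1 h (e t) t * hrel
    + c (e t) t * deriv e t * hsq

/-- conservation of the total surfactant mass under the Robin boundary
conditions (BC_c) at the moving contact points. -/
theorem surfactant_mass_conservation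
    (a b w : ℝ → ℝ) (h c : ℝ → ℝ → ℝ) (D : ℝ) (hD : 0 ≤ D)
    (ha : ContDiff ℝ 1 a) (hb : ContDiff ℝ 1 b) (hab : ∀ t, a t < b t)
    (hw : ContDiff ℝ 1 w)
    (hh : ContDiff ℝ (⊤ : ℕ∞) (fun p : ℝ × ℝ => h p.1 p.2))
    (hc : ContDiff ℝ (⊤ : ℕ∞) (fun p : ℝ × ℝ => c p.1 p.2))
    (hpin : ∀ t, h (a t) t = w (a t) ∧ h (b t) t = w (b t))
    (heq : ∀ t, ∀ x ∈ Set.Icc (a t) (b t),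
      pt1 c x t
          - (pt1 h x t / Qarc h x t) *
              px1 (fun x t => c x t * px1 h x t / Qarc h x t) x t
        = (D / Qarc h x t) * px1 (fun x t => px1 c x t / Qarc h x t) x t)
    (hbcb : ∀ t, D * px1 c (b t) t
        + c (b t) t * (1 + px1 h (b t) t * deriv w (b t)) * deriv b t = 0)
    (hbca : ∀ t, D * px1 c (a t) t
        + c (a t) t * (1 + px1 h (a t) t * deriv w (a t)) * deriv a t = 0) :
    ∀ t₁ t₂ : ℝ,
      (∫ x in a t₁..b t₁, c x t₁ * Real.sqrt (1 + px1 h x t₁ ^ 2))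
        = ∫ x in a t₂..b t₂, c x t₂ * Real.sqrt (1 + px1 h x t₂ ^ 2) := by
  have hH : ContDiff ℝ (⊤ : ℕ∞) (unc h) := hh
  have hC : ContDiff ℝ (⊤ : ℕ∞) (unc c) := hc
  have hfm_cont : Continuous (unc (fm c h)) := (contDiff_unc_fm hH hC).continuous
  have slice_cont : ∀ t, Continuous (fun x => fm c h x t) := fun t =>
    hfm_cont.comp (continuous_id.prodMk continuous_const)
  have slice_int : ∀ (p q t : ℝ),
      IntervalIntegrable (fun x => fm c h x t) MeasureTheory.volume p q :=
    fun p q t => (slice_cont t).intervalIntegrable p q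
  have hM : ∀ t₀ : ℝ, HasDerivAt (fun t => ∫ x in a t..b t, fm c h x t) 0 t₀ := by
    intro t₀
    have split : (fun t => ∫ x in a t..b t, fm c h x t)
        = fun t => ((∫ x in a t₀..b t₀, fm c h x t)
            + (∫ x in b t₀..b t, fm c h x t)) - (∫ x in a t₀..a t, fm c h x t) := by
      funext t
      have e1 := intervalIntegral.integral_add_adjacent_intervals
        (slice_int (a t) (a t₀) t) (slice_int (a t₀) (b t) t)
      have e2 := intervalIntegral.integral_add_adjacent_intervals
        (slice_int (a t₀) (b t₀) t) (slice_int (b t₀) (b t) t)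
      have e3 : (∫ x in (a t)..(a t₀), fm c h x t)
          = - ∫ x in (a t₀)..(a t), fm c h x t := intervalIntegral.integral_symm _ _
      rw [e3] at e1
      linarith
    rw [split]
    have d1 : HasDerivAt (fun t => ∫ x in a t₀..b t₀, fm c h x t)
        (∫ x in a t₀..b t₀, ft c h x t₀) t₀ :=
      hasDerivAt_integral_param hfm_cont (continuous_unc_ft hH hC)
        (fun x s => hasDerivAt_fm_t hH hC x s) (a t₀) (b t₀) t₀
    have d2 := hasDerivAt_integral_moving (contDiff_unc_fm hH hC) hb t₀
    have d3 := hasDerivAt_integral_moving (contDiff_unc_fm hH hC) ha t₀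
    have hI : (∫ x in a t₀..b t₀, ft c h x t₀)
        = gf c h D (b t₀) t₀ - gf c h D (a t₀) t₀ := by
      refine intervalIntegral.integral_eq_sub_of_hasDerivAt
        (f := fun x' => gf c h D x' t₀) (fun x hx => ?_) ?_
      · rw [Set.uIcc_of_le (hab t₀).le] at hx
        exact key_hasDerivAt_gf hH hC x t₀ (heq t₀ x hx)
      · exact ((continuous_unc_ft hH hC).comp
          (continuous_id.prodMk continuous_const)).intervalIntegrable _ _
    have hzb := boundary_zero (c := c) (D := D) hH hw hb (fun t => (hpin t).2) t₀ (hbcb t₀)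
    have hza := boundary_zero (c := c) (D := D) hH hw ha (fun t => (hpin t).1) t₀ (hbca t₀)
    have hval : (∫ x in a t₀..b t₀, ft c h x t₀)
        + fm c h (b t₀) t₀ * deriv b t₀ - fm c h (a t₀) t₀ * deriv a t₀ = 0 := by
      rw [hI]; linarith
    have := (d1.add d2).sub d3
    rw [hval] at this
    exact this
  intro t₁ t₂
  exact is_const_of_deriv_eq_zero (fun t => (hM t).differentiableAt)
    (fun t => (hM t).deriv) t₁ t₂
end
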